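/- arXiv:1805.04852 — 3 statements merged into one kernel-verified Lean document; each statement's English description precedes it below -/
import Mathlib

section
/- Every derivation in HLJ + ℍ (for ℍ a set of hypersequent rules) can be transformed into a derivation of the same end-hypersequent in which every application of external contraction (EC) has ec-rank 0, where the ec-rank of an (EC) application is the number of applications of rules other than (EC) between it and the root of the derivation. -/
/- Formulas of intuitionistic propositional logic -/
inductive Formula : Type
  | atom : ℕ → Formula
  | bot  : Formula
  | conj : Formula → Formula → Formula
  | disj : Formula → Formula → Formula
  | impl : Formula → Formula → Formula

/-- A sequent Γ ⇒ Π. -/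
abbrev Sequent : Type := Multiset Formula × Option Formula

/-- A hypersequent. -/
abbrev Hyper : Type := Multiset Sequent

/-- The data of one component of a hypersequent rule: the multiset Θ of
formulas added to the i-th active component Θ, Γᵢ ⇒ Πᵢ of the conclusion,
and the premiss-multisets Σ (one active premiss Σ, Γᵢ ⇒ Πᵢ for each). -/
structure CompRule : Type where
  concl : Multiset Formula
  prems : List (Multiset Formula)

/-- A hypersequent rule: external-context sharing, one active component in
each premiss; the premisses attached to `comps[i]` are the premisses linked
to the i-th component of the conclusion. -/
structure HypRule : Type where
  comps : List CompRule

/-- The rules of HLJ other than external weakening and external contraction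
(axioms, logical rules, internal structural rules and cut, each with a
shared hypersequent context G), as a relation between the list of premisses
and the conclusion. -/
inductive HBase : List Hyper → Hyper → Prop
  | ax (φ : Formula) : HBase [] {(({φ} : Multiset Formula), some φ)}
  | botL (Δ : Option Formula) : HBase [] {(({Formula.bot} : Multiset Formula), Δ)}
  | disjL {G : Hyper} {Γ : Multiset Formula} {Δ : Option Formula} (φ ψ : Formula) :
      HBase [(φ ::ₘ Γ, Δ) ::ₘ G, (ψ ::ₘ Γ, Δ) ::ₘ G] ((Formula.disj φ ψ ::ₘ Γ, Δ) ::ₘ G)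
  | disjR1 {G : Hyper} {Γ : Multiset Formula} (φ ψ : Formula) :
      HBase [(Γ, some φ) ::ₘ G] ((Γ, some (Formula.disj φ ψ)) ::ₘ G)
  | disjR2 {G : Hyper} {Γ : Multiset Formula} (φ ψ : Formula) :
      HBase [(Γ, some ψ) ::ₘ G] ((Γ, some (Formula.disj φ ψ)) ::ₘ G)
  | conjL {G : Hyper} {Γ : Multiset Formula} {Δ : Option Formula} (φ ψ : Formula) :
      HBase [(φ ::ₘ ψ ::ₘ Γ, Δ) ::ₘ G] ((Formula.conj φ ψ ::ₘ Γ, Δ) ::ₘ G)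
  | conjR {G : Hyper} {Γ : Multiset Formula} (φ ψ : Formula) :
      HBase [(Γ, some φ) ::ₘ G, (Γ, some ψ) ::ₘ G] ((Γ, some (Formula.conj φ ψ)) ::ₘ G)
  | implL {G : Hyper} {Γ : Multiset Formula} {Δ : Option Formula} (φ ψ : Formula) :
      HBase [(Γ, some φ) ::ₘ G, (ψ ::ₘ Γ, Δ) ::ₘ G] ((Formula.impl φ ψ ::ₘ Γ, Δ) ::ₘ G)
  | implR {G : Hyper} {Γ : Multiset Formula} (φ ψ : Formula) :
      HBase [(φ ::ₘ Γ, some ψ) ::ₘ G] ((Γ, some (Formula.impl φ ψ)) ::ₘ G)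
  | iw {G : Hyper} {Γ : Multiset Formula} {Δ : Option Formula} (φ : Formula) :
      HBase [(Γ, Δ) ::ₘ G] ((φ ::ₘ Γ, Δ) ::ₘ G)
  | ic {G : Hyper} {Γ : Multiset Formula} {Δ : Option Formula} (φ : Formula) :
      HBase [(φ ::ₘ φ ::ₘ Γ, Δ) ::ₘ G] ((φ ::ₘ Γ, Δ) ::ₘ G)
  | cut {G : Hyper} {Γ Γ' : Multiset Formula} {Δ : Option Formula} (φ : Formula) :
      HBase [(Γ, some φ) ::ₘ G, (φ ::ₘ Γ', Δ) ::ₘ G] ((Γ + Γ', Δ) ::ₘ G)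

/-- Labels of rule applications in an HLJ + ℍ derivation: external
contraction, external weakening, a rule of HLJ, or a rule of ℍ. -/
inductive HLab : Type
  | ec : HLab
  | ew : HLab
  | lj : HLab
  | hyp : HLab

/-- Derivation trees for HLJ + ℍ. -/
inductive HTree : Type
  | node : HLab → Hyper → List HTree → HTree

def HTree.lab : HTree → HLab
  | .node l _ _ => l

def HTree.concl : HTree → Hyper
  | .node _ h _ => h

def HTree.children : HTree → List HTree
  | .node _ _ ts => ts

/-- `IsHDeriv HR t` : the tree `t` is a correct derivation in HLJ + ℍ
(for ℍ = `HR` a set of hypersequent rules). -/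
inductive IsHDeriv (HR : Set HypRule) : HTree → Prop
  | lj {h : Hyper} {ts : List HTree} :
      HBase (ts.map HTree.concl) h →
      (∀ u ∈ ts, IsHDeriv HR u) →
      IsHDeriv HR (HTree.node HLab.lj h ts)
  | hyp (hr : HypRule) (hmem : hr ∈ HR) (G : Hyper)
      (ctx : List (Multiset Formula × Option Formula))
      (hlen : ctx.length = hr.comps.length) {ts : List HTree} :
      ts.map HTree.concl =
        ((hr.comps.zip ctx).map
          (fun pr => pr.1.prems.map (fun p => ((p + pr.2.1, pr.2.2) ::ₘ G)))).flatten →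
      (∀ u ∈ ts, IsHDeriv HR u) →
      IsHDeriv HR (HTree.node HLab.hyp
        ((((hr.comps.zip ctx).map fun pr => (pr.1.concl + pr.2.1, pr.2.2) :
          List Sequent) : Multiset Sequent) + G) ts)
  | ew {u : HTree} (s : Sequent) :
      IsHDeriv HR u → IsHDeriv HR (HTree.node HLab.ew (s ::ₘ u.concl) [u])
  | ec {u : HTree} (G : Hyper) (s : Sequent) :
      u.concl = s ::ₘ s ::ₘ G →
      IsHDeriv HR u → IsHDeriv HR (HTree.node HLab.ec (s ::ₘ G) [u])

attribute [local instance] Classical.propDecidable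

/-- `SubtreeAt t p u` : `u` is the subtree of `t` at position `p`. -/
inductive SubtreeAt : HTree → List ℕ → HTree → Prop
  | nil (t : HTree) : SubtreeAt t [] t
  | cons {l : HLab} {h : Hyper} {ts : List HTree} {i : ℕ} {u v : HTree} {p : List ℕ} :
      ts[i]? = some u → SubtreeAt u p v → SubtreeAt (HTree.node l h ts) (i :: p) v

/-- An application of external contraction (EC) occurs at position `p`. -/
def IsEcAt (t : HTree) (p : List ℕ) : Prop :=
  ∃ u : HTree, SubtreeAt t p u ∧ u.lab = HLab.ec

/-- The ec-rank of (the rule application at) position `p`: the number of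
applications of rules other than (EC) occurring between `p` and the root of
the derivation, i.e. at proper prefixes of `p`. -/
noncomputable def ecRank (t : HTree) (p : List ℕ) : ℕ :=
  ((Finset.range p.length).filter
    (fun k => ∃ u : HTree, SubtreeAt t (p.take k) u ∧ u.lab ≠ HLab.ec)).card

section AuxECPush

@[simp] lemma HTree.concl_node (l : HLab) (h : Hyper) (ts : List HTree) :
    (HTree.node l h ts).concl = h := rfl

@[simp] lemma HTree.lab_node (l : HLab) (h : Hyper) (ts : List HTree) :
    (HTree.node l h ts).lab = l := rfl

@[simp] lemma HTree.children_node (l : HLab) (h : Hyper) (ts : List HTree) :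
    (HTree.node l h ts).children = ts := rfl

/-- Derivation trees containing no application of (EC). -/
inductive ECFree : HTree → Prop
  | mk {l : HLab} {h : Hyper} {ts : List HTree} :
      l ≠ HLab.ec → (∀ u ∈ ts, ECFree u) → ECFree (HTree.node l h ts)

lemma ECFree.lab_ne {t : HTree} (h : ECFree t) : t.lab ≠ HLab.ec := by
  cases h with | mk h1 _ => exact h1

lemma ECFree.child {t : HTree} (h : ECFree t) : ∀ u ∈ t.children, ECFree u := by
  cases h with | mk _ h2 => exact h2

/-- `H` has an EC-free derivation. -/
def Der (HR : Set HypRule) (H : Hyper) : Prop :=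
  ∃ u : HTree, IsHDeriv HR u ∧ ECFree u ∧ u.concl = H

variable {HR : Set HypRule}

lemma Der.ew {H : Hyper} (h : Der HR H) (s : Sequent) : Der HR (s ::ₘ H) := by
  obtain ⟨u, hu, hf, hc⟩ := h
  refine ⟨HTree.node HLab.ew (s ::ₘ u.concl) [u], IsHDeriv.ew s hu, ?_, by simp [hc]⟩
  exact ECFree.mk (by simp) (by simpa using hf)

lemma Der.mono {H K : Hyper} (h : Der HR H) (hle : H ≤ K) : Der HR K := by
  obtain ⟨D, rfl⟩ := Multiset.le_iff_exists_add.mp hle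
  clear hle
  induction D using Multiset.induction_on with
  | empty => simpa using h
  | cons a D ih =>
      have := ih.ew a
      simpa [Multiset.add_cons] using this

lemma exists_trees : ∀ (prem : List Hyper), (∀ p ∈ prem, Der HR p) →
    ∃ ts : List HTree, ts.map HTree.concl = prem ∧
      (∀ u ∈ ts, IsHDeriv HR u) ∧ (∀ u ∈ ts, ECFree u)
  | [], _ => ⟨[], rfl, by simp, by simp⟩
  | p :: ps, h => by
      obtain ⟨u, hu, hf, hc⟩ := h p (by simp)
      obtain ⟨ts, h1, h2, h3⟩ := exists_trees ps (fun q hq => h q (by simp [hq]))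
      refine ⟨u :: ts, by simp [h1, hc], ?_, ?_⟩
      · rintro v hv
        rcases List.mem_cons.mp hv with rfl | hv
        · exact hu
        · exact h2 v hv
      · rintro v hv
        rcases List.mem_cons.mp hv with rfl | hv
        · exact hf
        · exact h3 v hv

lemma mkDer {prem : List Hyper} {conc : Hyper} (hb : HBase prem conc)
    (h : ∀ p ∈ prem, Der HR p) : Der HR conc := by
  obtain ⟨ts, h1, h2, h3⟩ := exists_trees prem h
  refine ⟨HTree.node HLab.lj conc ts, IsHDeriv.lj (by rwa [h1]) h2, ?_, rfl⟩
  exact ECFree.mk (by simp) h3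

/-- `K` follows from an EC-free derivable hypersequent by (EC)s only. -/
def Good (HR : Set HypRule) (K : Hyper) : Prop :=
  ∃ H : Hyper, Der HR H ∧ K ≤ H ∧ ∀ s ∈ H, s ∈ K

lemma le_listSum {α β : Type*} (g : α → Multiset β) :
    ∀ (l : List α), ∀ a ∈ l, g a ≤ (l.map g).sum
  | b :: l, a, ha => by
      rcases List.mem_cons.mp ha with rfl | ha
      · simp [List.map_cons]
      · calc g a ≤ (l.map g).sum := le_listSum g l a ha
          _ ≤ (b :: l |>.map g).sum := by simp [List.map_cons]

lemma mem_listSum {α β : Type*} {g : α → Multiset β} {s : β} :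
    ∀ {l : List α}, s ∈ (l.map g).sum → ∃ a ∈ l, s ∈ g a
  | [], hs => by simp at hs
  | b :: l, hs => by
      simp only [List.map_cons, List.sum_cons, Multiset.mem_add] at hs
      rcases hs with hs | hs
      · exact ⟨b, by simp, hs⟩
      · obtain ⟨a, ha1, ha2⟩ := mem_listSum hs
        exact ⟨a, by simp [ha1], ha2⟩

/-- The core combinatorial lemma: a context-parametric rule with premiss
components `As` and conclusion components `M` can absorb duplicated copies of
its active premiss components, at the price of duplicating `M`. -/
lemma core (As : List Sequent) (M : Hyper) (n : Sequent → ℕ) (P G : Hyper)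
    (rule : ∀ C : Hyper, (∀ A ∈ As, Der HR (A ::ₘ C)) → Der HR (M + C))
    (hprem : ∀ A ∈ As, Der HR (Multiset.replicate (n A + 1) A + G))
    (hcnt : ∀ A ∈ As, n A ≤ P.count A) :
    ∀ (k : ℕ) (m : Multiset Sequent), m ≤ P → m.card + k = P.card →
      Der HR ((k + 1) • M + (m + G)) := by
  intro k
  induction k with
  | zero =>
      intro m hle hcard
      have hm : m = P := Multiset.eq_of_le_of_card_le hle (by omega)
      subst hm
      have hd := rule (m + G) (fun A hA => (hprem A hA).mono ?_)
      · simpa using hd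
      · rw [Multiset.le_iff_count]
        intro b
        have h0 := hcnt A hA
        by_cases hb : b = A
        · subst hb
          simp only [Multiset.count_add, Multiset.count_replicate, if_pos rfl, if_true, eq_self_iff_true,
            Multiset.count_cons_self]
          omega
        · simp only [Multiset.count_add, Multiset.count_replicate,
            if_neg (fun h : _ = _ => hb h.symm), if_neg hb,
            Multiset.count_cons_of_ne hb]
          omega
  | succ k ih =>
      intro m hle hcard
      have hd := rule ((k + 1) • M + (m + G)) ?_
      · have heq : M + ((k + 1) • M + (m + G)) = (k + 1 + 1) • M + (m + G) := by
          ext b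
          simp only [Multiset.count_add, Multiset.count_nsmul]
          ring
        rwa [heq] at hd
      · intro A hA
        by_cases hc : A ::ₘ m ≤ P
        · have h1 := ih (A ::ₘ m) hc (by simp; omega)
          have heq : (k + 1) • M + (A ::ₘ m + G) = A ::ₘ ((k + 1) • M + (m + G)) := by
            ext b
            by_cases hb : b = A
            · subst hb
              simp [Multiset.count_add, Multiset.count_cons_self]
              try omega
            · simp [Multiset.count_add, Multiset.count_cons_of_ne hb]
          rwa [heq] at h1
        · have h1 : P.count A < m.count A + 1 := by
            by_contra hcon
            apply hc
            rw [Multiset.le_iff_count]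
            intro b
            by_cases hb : b = A
            · subst hb; simp [Multiset.count_cons_self]; omega
            · have := Multiset.le_iff_count.mp hle b
              simp [Multiset.count_cons_of_ne hb]; omega
          have h2 : n A ≤ m.count A := by have := hcnt A hA; omega
          refine (hprem A hA).mono ?_
          rw [Multiset.le_iff_count]
          intro b
          by_cases hb : b = A
          · subst hb
            simp only [Multiset.count_add, Multiset.count_replicate, if_pos rfl, if_true, eq_self_iff_true,
              Multiset.count_cons_self, Multiset.count_nsmul]
            omega
          · simp only [Multiset.count_add, Multiset.count_replicate,
              if_neg (fun h : _ = _ => hb h.symm),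
              Multiset.count_cons_of_ne hb, Multiset.count_nsmul]
            omega

/-- Closure of `Good` under a context-parametric EC-free rule. -/
lemma keyGen (As : List Sequent) (M G : Hyper)
    (rule : ∀ C : Hyper, (∀ A ∈ As, Der HR (A ::ₘ C)) → Der HR (M + C))
    (prem : ∀ A ∈ As, Good HR (A ::ₘ G)) :
    Good HR (M + G) := by
  classical
  have hch : ∀ A : Sequent, ∃ H : Hyper,
      A ∈ As → Der HR H ∧ A ::ₘ G ≤ H ∧ ∀ s ∈ H, s ∈ A ::ₘ G := by
    intro A
    by_cases hA : A ∈ As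
    · obtain ⟨H, h⟩ := prem A hA; exact ⟨H, fun _ => h⟩
    · exact ⟨0, fun h => absurd h hA⟩
  choose f hf using hch
  set E : Sequent → Multiset Sequent := fun A => f A - (A ::ₘ G) with hE
  set n : Sequent → ℕ := fun A => (E A).count A with hn
  set F : Multiset Sequent := (As.map (fun A => (E A).filter (· ≠ A))).sum with hF
  set P : Multiset Sequent := (As.map (fun A => Multiset.replicate (n A) A)).sum with hP
  have hEA : ∀ A ∈ As, f A = E A + (A ::ₘ G) := by
    intro A hA
    rw [hE]
    exact (tsub_add_cancel_of_le (hf A hA).2.1).symm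
  have hprem : ∀ A ∈ As, Der HR (Multiset.replicate (n A + 1) A + (G + F)) := by
    intro A hA
    refine ((hf A hA).1).mono ?_
    rw [hEA A hA, Multiset.le_iff_count]
    intro b
    have hFle : Multiset.count b ((E A).filter (· ≠ A)) ≤ F.count b :=
      Multiset.count_le_of_le b (le_listSum _ As A hA)
    by_cases hb : b = A
    · subst hb
      simp only [Multiset.count_add, Multiset.count_replicate, if_pos rfl, if_true, eq_self_iff_true,
        Multiset.count_cons_self, hn]
      omega
    · have hfe : Multiset.count b ((E A).filter (· ≠ A)) = Multiset.count b (E A) := by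
        rw [Multiset.count_filter, if_pos hb]
      simp only [Multiset.count_add, Multiset.count_replicate,
        if_neg (fun h : _ = _ => hb h.symm), Multiset.count_cons_of_ne hb] at *
      omega
  have hcnt : ∀ A ∈ As, n A ≤ P.count A := by
    intro A hA
    have := Multiset.count_le_of_le A (le_listSum (fun A => Multiset.replicate (n A) A) As A hA)
    simpa [Multiset.count_replicate] using this
  have hcore := core As M n P (G + F) rule hprem hcnt P.card 0 (by simp) (by simp)
  refine ⟨(P.card + 1) • M + (0 + (G + F)), hcore, ?_, ?_⟩
  · rw [Multiset.le_iff_count]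
    intro b
    simp only [Multiset.count_add, Multiset.count_nsmul, Multiset.count_zero, zero_add]
    have h := Nat.le_mul_of_pos_left (Multiset.count b M)
      (show 0 < Multiset.card P + 1 by omega)
    linarith
  · intro s hs
    simp only [Multiset.mem_add, zero_add] at hs
    rcases hs with hs | hs | hs
    · have hsM : s ∈ M := by
        have h0 : Multiset.count s ((P.card + 1) • M) ≠ 0 :=
          by simpa [Multiset.count_eq_zero] using hs
        rw [Multiset.count_nsmul] at h0
        rw [← Multiset.count_pos]
        by_contra hcon
        exact h0 (by simp [Nat.le_zero.mp (Nat.not_lt.mp hcon)])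
      exact Multiset.mem_add.mpr (Or.inl hsM)
    · exact Multiset.mem_add.mpr (Or.inr hs)
    · -- s ∈ F
      rw [hF] at hs
      have hex := mem_listSum hs
      obtain ⟨A, hA, hsA⟩ := hex
      have hs1 : s ∈ E A := Multiset.mem_of_mem_filter hsA
      have hs2 : s ≠ A := by
        have := Multiset.of_mem_filter hsA
        simpa using this
      have hs3 : s ∈ f A := Multiset.mem_of_le (tsub_le_self) hs1
      have := (hf A hA).2.2 s hs3
      rcases Multiset.mem_cons.mp this with h | h
      · exact absurd h hs2
      · exact Multiset.mem_add.mpr (Or.inr h)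

lemma key1 (A₁ B : Sequent) (G : Hyper)
    (rule : ∀ C : Hyper, Der HR (A₁ ::ₘ C) → Der HR (B ::ₘ C))
    (h1 : Good HR (A₁ ::ₘ G)) : Good HR (B ::ₘ G) := by
  have := keyGen [A₁] {B} G (fun C hc => by
      simpa [Multiset.singleton_add] using rule C (hc A₁ (by simp)))
    (by intro A hA; simp at hA; subst hA; exact h1)
  simpa [Multiset.singleton_add] using this

lemma key2 (A₁ A₂ B : Sequent) (G : Hyper)
    (rule : ∀ C : Hyper, Der HR (A₁ ::ₘ C) → Der HR (A₂ ::ₘ C) → Der HR (B ::ₘ C))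
    (h1 : Good HR (A₁ ::ₘ G)) (h2 : Good HR (A₂ ::ₘ G)) : Good HR (B ::ₘ G) := by
  have := keyGen [A₁, A₂] {B} G (fun C hc => by
      simpa [Multiset.singleton_add] using
        rule C (hc A₁ (by simp)) (hc A₂ (by simp)))
    (by
      intro A hA
      rcases List.mem_cons.mp hA with rfl | hA
      · exact h1
      · simp at hA; subst hA; exact h2)
  simpa [Multiset.singleton_add] using this


lemma good_of_deriv {t : HTree} (h : IsHDeriv HR t) : Good HR t.concl := by
  induction h with
  | @lj h ts hb hts ih =>
      simp only [HTree.concl_node]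
      have hg : ∀ X ∈ ts.map HTree.concl, Good HR X := by
        intro X hX
        obtain ⟨u, hu, rfl⟩ := List.mem_map.mp hX
        exact ih u hu
      generalize hEq : ts.map HTree.concl = L at hb hg
      clear hEq hts ih
      cases hb with
      | ax φ => exact ⟨_, mkDer (HBase.ax φ) (by simp), le_refl _, fun s hs => hs⟩
      | botL Δ => exact ⟨_, mkDer (HBase.botL Δ) (by simp), le_refl _, fun s hs => hs⟩
      | @disjL G Γ Δ φ ψ =>
          refine key2 (φ ::ₘ Γ, Δ) (ψ ::ₘ Γ, Δ) _ G (fun C h1 h2 => ?_)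
            (hg _ (by simp)) (hg _ (by simp))
          refine mkDer (HBase.disjL φ ψ) ?_
          intro p hp
          simp only [List.mem_cons, List.not_mem_nil, or_false] at hp
          rcases hp with rfl | rfl
          exacts [h1, h2]
      | @disjR1 G Γ φ ψ =>
          refine key1 (Γ, some φ) _ G (fun C h1 => ?_) (hg _ (by simp))
          refine mkDer (HBase.disjR1 φ ψ) ?_
          intro p hp
          simp only [List.mem_cons, List.not_mem_nil, or_false] at hp
          rcases hp with rfl
          exact h1
      | @disjR2 G Γ φ ψ =>
          refine key1 (Γ, some ψ) _ G (fun C h1 => ?_) (hg _ (by simp))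
          refine mkDer (HBase.disjR2 φ ψ) ?_
          intro p hp
          simp only [List.mem_cons, List.not_mem_nil, or_false] at hp
          rcases hp with rfl
          exact h1
      | @conjL G Γ Δ φ ψ =>
          refine key1 (φ ::ₘ ψ ::ₘ Γ, Δ) _ G (fun C h1 => ?_) (hg _ (by simp))
          refine mkDer (HBase.conjL φ ψ) ?_
          intro p hp
          simp only [List.mem_cons, List.not_mem_nil, or_false] at hp
          rcases hp with rfl
          exact h1
      | @conjR G Γ φ ψ =>
          refine key2 (Γ, some φ) (Γ, some ψ) _ G (fun C h1 h2 => ?_)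
            (hg _ (by simp)) (hg _ (by simp))
          refine mkDer (HBase.conjR φ ψ) ?_
          intro p hp
          simp only [List.mem_cons, List.not_mem_nil, or_false] at hp
          rcases hp with rfl | rfl
          exacts [h1, h2]
      | @implL G Γ Δ φ ψ =>
          refine key2 (Γ, some φ) (ψ ::ₘ Γ, Δ) _ G (fun C h1 h2 => ?_)
            (hg _ (by simp)) (hg _ (by simp))
          refine mkDer (HBase.implL φ ψ) ?_
          intro p hp
          simp only [List.mem_cons, List.not_mem_nil, or_false] at hp
          rcases hp with rfl | rfl
          exacts [h1, h2]
      | @implR G Γ φ ψ =>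
          refine key1 (φ ::ₘ Γ, some ψ) _ G (fun C h1 => ?_) (hg _ (by simp))
          refine mkDer (HBase.implR φ ψ) ?_
          intro p hp
          simp only [List.mem_cons, List.not_mem_nil, or_false] at hp
          rcases hp with rfl
          exact h1
      | @iw G Γ Δ φ =>
          refine key1 (Γ, Δ) _ G (fun C h1 => ?_) (hg _ (by simp))
          refine mkDer (HBase.iw φ) ?_
          intro p hp
          simp only [List.mem_cons, List.not_mem_nil, or_false] at hp
          rcases hp with rfl
          exact h1
      | @ic G Γ Δ φ =>
          refine key1 (φ ::ₘ φ ::ₘ Γ, Δ) _ G (fun C h1 => ?_) (hg _ (by simp))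
          refine mkDer (HBase.ic φ) ?_
          intro p hp
          simp only [List.mem_cons, List.not_mem_nil, or_false] at hp
          rcases hp with rfl
          exact h1
      | @cut G Γ Γ' Δ φ =>
          refine key2 (Γ, some φ) (φ ::ₘ Γ', Δ) _ G (fun C h1 h2 => ?_)
            (hg _ (by simp)) (hg _ (by simp))
          refine mkDer (HBase.cut φ) ?_
          intro p hp
          simp only [List.mem_cons, List.not_mem_nil, or_false] at hp
          rcases hp with rfl | rfl
          exacts [h1, h2]
  | @hyp hr hmem G ctx hlen ts heq hts ih =>
      simp only [HTree.concl_node]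
      set As : List Sequent :=
        ((hr.comps.zip ctx).map
          (fun pr => pr.1.prems.map (fun p => (p + pr.2.1, pr.2.2)))).flatten with hAs
      have hmap : ∀ C : Hyper, As.map (· ::ₘ C) =
          ((hr.comps.zip ctx).map
            (fun pr => pr.1.prems.map (fun p => ((p + pr.2.1, pr.2.2) ::ₘ C)))).flatten := by
        intro C
        rw [hAs, List.map_flatten, List.map_map]
        exact congrArg List.flatten
          (List.map_congr_left (fun pr _ => by simp [List.map_map, Function.comp_def]))
      apply keyGen As _ G
      · intro C hC
        obtain ⟨ts', h1, h2, h3⟩ := exists_trees (As.map (· ::ₘ C)) (by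
            intro p hp
            obtain ⟨A, hA, rfl⟩ := List.mem_map.mp hp
            exact hC A hA)
        refine ⟨HTree.node HLab.hyp _ ts',
          IsHDeriv.hyp hr hmem C ctx hlen ?_ h2, ECFree.mk (by simp) h3, rfl⟩
        rw [h1, hmap]
      · intro A hA
        have hmem2 : (A ::ₘ G) ∈ ts.map HTree.concl := by
          rw [heq, ← hmap G]
          exact List.mem_map.mpr ⟨A, hA, rfl⟩
        obtain ⟨u, hu, hcu⟩ := List.mem_map.mp hmem2
        have := ih u hu
        rwa [hcu] at this
  | @ew u s hu ih =>
      obtain ⟨H, hd, hle, hsupp⟩ := ih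
      refine ⟨s ::ₘ H, hd.ew s, ?_, ?_⟩
      · simpa [HTree.concl_node] using Multiset.cons_le_cons s hle
      · intro x hx
        rcases Multiset.mem_cons.mp hx with rfl | hx
        · simp
        · exact Multiset.mem_cons_of_mem (hsupp x hx)
  | @ec u G s hcu hu ih =>
      rw [hcu] at ih
      obtain ⟨H, hd, hle, hsupp⟩ := ih
      refine ⟨H, hd, le_trans (Multiset.le_cons_self _ s) hle, ?_⟩
      · intro x hx
        have := hsupp x hx
        simp only [HTree.concl_node]
        rcases Multiset.mem_cons.mp this with rfl | h2
        · simp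
        · exact h2

/-- A chain of (EC) applications at the root, above an EC-free derivation. -/
inductive EcChain : HTree → Prop
  | free {t : HTree} : ECFree t → EcChain t
  | step {u : HTree} {s : Sequent} {G : Hyper} :
      u.concl = s ::ₘ s ::ₘ G → EcChain u → EcChain (HTree.node HLab.ec (s ::ₘ G) [u])

lemma build : ∀ (n : ℕ) (u : HTree) (K : Hyper), IsHDeriv HR u → EcChain u →
    K ≤ u.concl → (∀ s ∈ u.concl, s ∈ K) →
    Multiset.card u.concl = Multiset.card K + n →
    ∃ t' : HTree, IsHDeriv HR t' ∧ EcChain t' ∧ t'.concl = K := by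
  intro n
  induction n with
  | zero =>
      intro u K h1 h2 h3 _ h5
      exact ⟨u, h1, h2, (Multiset.eq_of_le_of_card_le h3 (by omega)).symm⟩
  | succ n ih =>
      intro u K h1 h2 h3 h4 h5
      have hne : K ≠ u.concl := by
        intro h; rw [h] at h5; omega
      have hlt : K < u.concl := lt_of_le_of_ne h3 hne
      obtain ⟨s, hs⟩ := Multiset.lt_iff_cons_le.mp hlt
      have hs1 : s ∈ u.concl := Multiset.mem_of_le hs (by simp)
      have hsK : s ∈ K := h4 s hs1
      have hcount : 2 ≤ Multiset.count s u.concl := by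
        have h6 := Multiset.count_le_of_le s hs
        have h7 := Multiset.count_pos.mpr hsK
        simp only [Multiset.count_cons_self] at h6
        omega
      have hmem2 : s ∈ u.concl.erase s := by
        rw [← Multiset.count_pos, Multiset.count_erase_self]
        omega
      have herase : s ::ₘ (u.concl.erase s).erase s = u.concl.erase s :=
        Multiset.cons_erase hmem2
      have hsplit : u.concl = s ::ₘ s ::ₘ ((u.concl.erase s).erase s) := by
        rw [herase, Multiset.cons_erase hs1]
      have hv : IsHDeriv HR (HTree.node HLab.ec
          (s ::ₘ (u.concl.erase s).erase s) [u]) := IsHDeriv.ec _ s hsplit h1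
      apply ih (HTree.node HLab.ec (s ::ₘ (u.concl.erase s).erase s) [u]) K hv
        (EcChain.step hsplit h2)
      · simp only [HTree.concl_node, herase]
        rw [Multiset.le_iff_count]
        intro b
        by_cases hb : b = s
        · subst hb
          rw [Multiset.count_erase_self]
          have := Multiset.count_le_of_le b hs
          simp only [Multiset.count_cons_self] at this
          omega
        · rw [Multiset.count_erase_of_ne hb]
          exact Multiset.le_iff_count.mp h3 b
      · simp only [HTree.concl_node, herase]
        intro x hx
        exact h4 x (Multiset.mem_of_le (Multiset.erase_le s u.concl) hx)
      · simp only [HTree.concl_node, herase]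
        rw [Multiset.card_erase_of_mem hs1, h5, Nat.add_succ, Nat.pred_succ]

lemma subtree_unique : ∀ {t : HTree} {p : List ℕ} {u v : HTree},
    SubtreeAt t p u → SubtreeAt t p v → u = v := by
  intro t p u v h1
  induction h1 generalizing v with
  | nil => intro h2; cases h2; rfl
  | cons hget hsub ih =>
      intro h2
      cases h2 with
      | cons hget2 hsub2 =>
          rw [hget] at hget2
          injection hget2 with hh
          subst hh
          exact ih hsub2

lemma subtree_append : ∀ {a b : List ℕ} {t w : HTree},
    SubtreeAt t (a ++ b) w → ∃ v, SubtreeAt t a v ∧ SubtreeAt v b w := by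
  intro a
  induction a with
  | nil => intro b t w h; exact ⟨t, SubtreeAt.nil t, h⟩
  | cons i a ih =>
      intro b t w h
      cases h with
      | cons hget hsub =>
          obtain ⟨v, hv1, hv2⟩ := ih hsub
          exact ⟨v, SubtreeAt.cons hget hv1, hv2⟩

lemma ecfree_subtree : ∀ {t : HTree} {p : List ℕ} {u : HTree},
    SubtreeAt t p u → ECFree t → ECFree u := by
  intro t p u h
  induction h with
  | nil => exact id
  | cons hget hsub ih =>
      intro hf
      exact ih (hf.child _ (List.mem_of_getElem? hget))

lemma ecchain_subtree : ∀ {t : HTree} {p : List ℕ} {u : HTree},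
    SubtreeAt t p u → EcChain t → EcChain u := by
  intro t p u h
  induction h with
  | nil => exact id
  | @cons l h ts i u1 v p hget hsub ih =>
      intro hc
      cases hc with
      | free hf => exact ih (EcChain.free (hf.child _ (List.mem_of_getElem? hget)))
      | step hequ hc =>
          rcases i with _ | i
          · simp only [List.getElem?_cons_zero] at hget
            injection hget with hh
            subst hh
            exact ih hc
          · simp at hget
  
lemma chain_lab {v w : HTree} {r : List ℕ} (hc : EcChain v) (hs : SubtreeAt v r w)
    (hr : r ≠ []) (hw : w.lab = HLab.ec) : v.lab = HLab.ec := by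
  cases hc with
  | free hf => exact absurd hw (ecfree_subtree hs hf).lab_ne
  | step _ _ => simp

end AuxECPush

/-- Lemma (EC pushed to the root): every HLJ + ℍ derivation can be
transformed into a derivation of the same end-hypersequent in which all
applications of external contraction have ec-rank 0. -/
theorem ec_rank_zero (HR : Set HypRule) (t : HTree) (h : IsHDeriv HR t) :
    ∃ t' : HTree, IsHDeriv HR t' ∧ t'.concl = t.concl ∧
      ∀ p : List ℕ, IsEcAt t' p → ecRank t' p = 0 := by
  obtain ⟨H, ⟨u, hu, hf, hcu⟩, hle, hsupp⟩ := good_of_deriv h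
  have hcard : Multiset.card u.concl = Multiset.card t.concl +
      (Multiset.card H - Multiset.card t.concl) := by
    rw [hcu]
    have := Multiset.card_le_card hle
    omega
  obtain ⟨t', h1, h2, h3⟩ := build (Multiset.card H - Multiset.card t.concl) u t.concl hu
    (EcChain.free hf) (by rw [hcu]; exact hle) (by rw [hcu]; exact hsupp) hcard
  refine ⟨t', h1, h3, ?_⟩
  intro p hp
  obtain ⟨w, hw, hwlab⟩ := hp
  rw [ecRank, Finset.card_eq_zero, Finset.filter_eq_empty_iff]
  intro k hk
  simp only [Finset.mem_range] at hk
  rintro ⟨v, hv, hvlab⟩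
  have hsplit : SubtreeAt t' (p.take k ++ p.drop k) w := by
    rwa [List.take_append_drop]
  obtain ⟨v', hv1, hv2⟩ := subtree_append hsplit
  have hvv : v = v' := subtree_unique hv hv1
  subst hvv
  have hdrop : p.drop k ≠ [] := by
    intro hh
    have := List.drop_eq_nil_iff.mp hh
    omega
  exact hvlab (chain_lab (ecchain_subtree hv1 h2) hv2 hdrop hwlab)
end

section
/- Any derivation in HLJ + ℍ of a sequent (a hypersequent with a single component) can be transformed into a derivation of the same sequent in structured form, i.e., one in which all applications of external contraction (EC) occur in a queue immediately above the root, and every application of external weakening (EW) occurs in a queue immediately above a premiss G | Cᵢ of a rule (r) with more than one premiss, introducing components of the shared context G in such a way that each component of G is contained in at least one of the hypersequents G₁,…,Gₙ at the tops of those queues. -/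
/-- `QueueTo t v` : the derivation `t` consists of a (possibly empty) queue
of external weakening (EW) applications above `v`, whose last rule is not
(EW). -/
inductive QueueTo : HTree → HTree → Prop
  | base {t : HTree} : t.lab ≠ HLab.ew → QueueTo t t
  | step {u v : HTree} {h : Hyper} : QueueTo u v → QueueTo (HTree.node HLab.ew h [u]) v

/-- `SB t` : `t` is a structured body, i.e. a derivation containing no (EC)
application, in which every (EW) application occurs in a queue immediately
above a premiss G | Cᵢ of a rule (r) with more than one premiss, and for
every such rule application each component of the shared context G is
contained in at least one of the hypersequents Gᵢ at the tops of those
queues (where the top of the i-th queue is Gᵢ | Cᵢ). -/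
inductive SB : HTree → Prop
  | small {l : HLab} {h : Hyper} {ts : List HTree} :
      l ≠ HLab.ec → l ≠ HLab.ew → ts.length ≤ 1 →
      (∀ u ∈ ts, SB u) →
      SB (HTree.node l h ts)
  | big {l : HLab} {h : Hyper} {ts : List HTree} :
      l ≠ HLab.ec → l ≠ HLab.ew → 2 ≤ ts.length →
      (∀ u ∈ ts, ∃ v : HTree, QueueTo u v) →
      (∀ u ∈ ts, ∀ v : HTree, QueueTo u v → SB v) →
      (∃ (G : Hyper) (Cs : List Sequent), Cs.length = ts.length ∧
        ts.map HTree.concl = Cs.map (fun C => C ::ₘ G) ∧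
        ∀ s ∈ G, ∃ pr ∈ ts.zip Cs, ∃ (v : HTree) (Gv : Hyper),
          QueueTo pr.1 v ∧ v.concl = pr.2 ::ₘ Gv ∧ s ∈ Gv) →
      SB (HTree.node l h ts)

/-- A derivation is in structured form iff all (EC) applications occur in a
queue immediately above the root and the rest of the derivation is a
structured body. -/
inductive StructuredForm : HTree → Prop
  | ofSB {t : HTree} : SB t → StructuredForm t
  | ecStep {u : HTree} {h : Hyper} :
      StructuredForm u → StructuredForm (HTree.node HLab.ec h [u])

/-!
For every derivable hypersequent `H` we find a derivation that is a structured body of some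
nonempty `X` whose components all occur in `H`.
This set-like invariant absorbs (EW) and (EC) for free, and for `H = s` it gives
`X = s | ⋯ | s`, which a queue of (EC) turns into `s`.

For a rule with premisses `Cᵢ | G` we have structured derivations of `Cᵢ | Gᵢ` with the `Gᵢ`
inside `Cᵢ | G`, and apply the rule to them weakened to the shared context `⋃ Gᵢ`. The
difficulty is that `Gᵢ` may contain further copies of `Cᵢ`, which need not occur in the
conclusion. These values are eliminated one at a time: by induction on the number of such
values, and for each of them on its number of copies, feeding the rule its own conclusion
as the new derivation of that premiss.
-/

deriving instance DecidableEq for Formula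

section Basic

variable {HR : Set HypRule}

theorem SB.leaf {l : HLab} {h : Hyper} (hec : l ≠ .ec) (hew : l ≠ .ew) : SB (.node l h []) :=
  .small hec hew (by simp) (by simp)

theorem SB.lab_ne_ew {z : HTree} (h : SB z) : z.lab ≠ .ew := by
  cases h <;> assumption

def SBDerivable (HR : Set HypRule) (X : Hyper) : Prop :=
  ∃ z, IsHDeriv HR z ∧ SB z ∧ z.concl = X

def SBDerivableSubset (HR : Set HypRule) (H : Hyper) : Prop :=
  ∃ X, SBDerivable HR X ∧ X ≠ 0 ∧ ∀ y ∈ X, y ∈ H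

theorem SBDerivableSubset.mono {H H' : Hyper} (h : SBDerivableSubset HR H)
    (hH : ∀ y ∈ H, y ∈ H') : SBDerivableSubset HR H' :=
  let ⟨X, hX, hne, hXH⟩ := h
  ⟨X, hX, hne, fun y hy => hH y (hXH y hy)⟩

end Basic

section Weaken

variable {HR : Set HypRule}

instance : Inhabited HTree := ⟨.node .lj 0 []⟩

def HTree.weaken : List Sequent → HTree → HTree
  | [], z => z
  | s :: l, z => .node .ew (s ::ₘ (weaken l z).concl) [weaken l z]

@[simp]
theorem HTree.weaken_nil (z : HTree) : HTree.weaken [] z = z := rfl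

@[simp]
theorem HTree.concl_weaken (l : List Sequent) (z : HTree) :
    (z.weaken l).concl = ↑l + z.concl := by
  induction l with
  | nil => simp
  | cons s l ih =>
    show s ::ₘ (z.weaken l).concl = _
    rw [ih, ← Multiset.cons_coe, Multiset.cons_add]

theorem IsHDeriv.weaken {z : HTree} (hz : IsHDeriv HR z) (l : List Sequent) :
    IsHDeriv HR (z.weaken l) := by
  induction l with
  | nil => exact hz
  | cons s l ih => exact .ew s ih

theorem queueTo_weaken {z : HTree} (hz : z.lab ≠ .ew) (l : List Sequent) :
    QueueTo (z.weaken l) z := by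
  induction l with
  | nil => exact .base hz
  | cons s l ih => exact .step ih

theorem eq_of_queueTo_weaken {z v : HTree} (hz : z.lab ≠ .ew) {l : List Sequent}
    (h : QueueTo (z.weaken l) v) : v = z := by
  induction l with
  | nil =>
    cases h with
    | base => rfl
    | step => exact absurd rfl hz
  | cons s l ih =>
    cases h with
    | base hb => exact absurd rfl hb
    | step h => exact ih h

end Weaken

section RuleApplication

variable {HR : Set HypRule} {lab : HLab} {Bs : List Sequent} {Ds : Hyper}

structure SharedRule (HR : Set HypRule) (lab : HLab) (Bs : List Sequent) (Ds : Hyper) :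
    Prop where
  lab_ne_ec : lab ≠ .ec
  lab_ne_ew : lab ≠ .ew
  isHDeriv_node : ∀ (G : Hyper) (ts : List HTree), ts.map HTree.concl = Bs.map (· ::ₘ G) →
    (∀ u ∈ ts, IsHDeriv HR u) → IsHDeriv HR (.node lab (Ds + G) ts)

theorem HTree.concl_weaken_tsub {z : HTree} {b : Sequent} {G G' : Hyper}
    (hz : z.concl = b ::ₘ G') (hle : G' ≤ G) :
    (z.weaken (G - G').toList).concl = b ::ₘ G := by
  rw [concl_weaken, Multiset.coe_toList, hz, Multiset.add_cons, tsub_add_cancel_of_le hle]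

theorem SB.node_weaken_sup {l : HLab} (hec : l ≠ .ec) (hew : l ≠ .ew) (h : Hyper)
    {z : Sequent → HTree} {Gs : Sequent → Hyper}
    (hz : ∀ b ∈ Bs, SB (z b) ∧ (z b).concl = b ::ₘ Gs b) :
    SB (.node l h (Bs.map fun b => (z b).weaken (Bs.toFinset.sup Gs - Gs b).toList)) := by
  set G := Bs.toFinset.sup Gs
  set e : Sequent → HTree := fun b => (z b).weaken (G - Gs b).toList
  rcases le_or_gt Bs.length 1 with hlen | hlen
  · refine .small hec hew (by simpa using hlen) ?_
    simp only [List.mem_map]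
    rintro _ ⟨b, hb, rfl⟩
    have hG : G ≤ Gs b := Finset.sup_le fun b' hb' => by
      rw [Finset.card_le_one.1 ((List.toFinset_card_le Bs).trans hlen) b' hb' b
        (List.mem_toFinset.2 hb)]
    simpa [e, tsub_eq_zero_of_le hG] using (hz b hb).1
  have hzip : (Bs.map e).zip Bs = Bs.map fun b => (e b, b) := by
    simpa using List.zip_map' (f := e) (g := id) (l := Bs)
  refine .big hec hew (by simpa using hlen.nat_succ_le) ?_ ?_
    ⟨G, Bs, by simp, ?_, fun s hs => ?_⟩
  · simp only [List.mem_map]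
    rintro _ ⟨b, hb, rfl⟩
    exact ⟨z b, queueTo_weaken (hz b hb).1.lab_ne_ew _⟩
  · simp only [List.mem_map]
    rintro _ ⟨b, hb, rfl⟩ v hv
    rw [eq_of_queueTo_weaken (hz b hb).1.lab_ne_ew hv]
    exact (hz b hb).1
  · rw [List.map_map]
    exact List.map_congr_left fun b hb =>
      HTree.concl_weaken_tsub (hz b hb).2 (Finset.le_sup (List.mem_toFinset.2 hb))
  · obtain ⟨b, hb, hsb⟩ := Multiset.mem_sup.1 hs
    have hb := List.mem_toFinset.1 hb
    exact ⟨(e b, b), hzip ▸ List.mem_map_of_mem hb, z b, Gs b,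
      queueTo_weaken (hz b hb).1.lab_ne_ew _, (hz b hb).2, hsb⟩

theorem SharedRule.sbDerivable_add_sup (hR : SharedRule HR lab Bs Ds) {P : Sequent → Hyper}
    (hP : ∀ b ∈ Bs, SBDerivable HR (P b) ∧ b ∈ P b) :
    SBDerivable HR (Ds + Bs.toFinset.sup fun b => (P b).erase b) := by
  choose! z hz hsb hc using fun b hb => (hP b hb).1
  have hc' : ∀ b ∈ Bs, (z b).concl = b ::ₘ (P b).erase b := fun b hb =>
    (hc b hb).trans (Multiset.cons_erase (hP b hb).2).symm
  refine ⟨_, hR.isHDeriv_node _ _ ?_ ?_,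
    SB.node_weaken_sup hR.lab_ne_ec hR.lab_ne_ew _ fun b hb => ⟨hsb b hb, hc' b hb⟩, rfl⟩
  · rw [List.map_map]
    exact List.map_congr_left fun b hb => HTree.concl_weaken_tsub (hc' b hb)
      (Finset.le_sup (f := fun b => (P b).erase b) (List.mem_toFinset.2 hb))
  · simp only [List.mem_map]
    rintro _ ⟨b, hb, rfl⟩
    exact (hz b hb).weaken _

end RuleApplication

section Providers

variable {HR : Set HypRule} {T U : Set Sequent} {E : Sequent → ℕ}

def CountBounded (U : Set Sequent) (E : Sequent → ℕ) (X : Hyper) : Prop :=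
  ∀ w ∈ U, X.count w ≤ E w

/-- `X` can serve, after weakening, as the `b`-premiss of a rule application whose
conclusion should only contain components in `T`. -/
structure IsProvider (HR : Set HypRule) (T U : Set Sequent) (E : Sequent → ℕ) (b : Sequent)
    (X : Hyper) : Prop where
  sbDerivable : SBDerivable HR X
  mem : b ∈ X
  mem_or_mem : ∀ y ∈ X, y = b ∨ y ∈ T
  countBounded : CountBounded U E (X.erase b)

theorem IsProvider.promote_self {a : Sequent} {X : Hyper} (hX : IsProvider HR T U E a X) :
    IsProvider HR (insert a T) (insert a U) (Function.update E a (X.count a - 1)) a X where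
  sbDerivable := hX.sbDerivable
  mem := hX.mem
  mem_or_mem y hy := .inr <| (hX.mem_or_mem y hy).elim (· ▸ Set.mem_insert _ _)
    (Set.mem_insert_of_mem _)
  countBounded w hw := by
    rcases eq_or_ne w a with rfl | hwa
    · simp
    · simpa [hwa] using hX.countBounded w (hw.resolve_left hwa)

theorem IsProvider.promote_of_ne {a b : Sequent} {Y : Hyper} (hY : IsProvider HR T U E b Y)
    (hba : b ≠ a) (haT : a ∉ T) (k : ℕ) :
    IsProvider HR (insert a T) (insert a U) (Function.update E a k) b Y where
  sbDerivable := hY.sbDerivable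
  mem := hY.mem
  mem_or_mem y hy := (hY.mem_or_mem y hy).imp_right (Set.mem_insert_of_mem _)
  countBounded w hw := by
    rcases eq_or_ne w a with rfl | hwa
    · have : w ∉ Y := fun h => (hY.mem_or_mem w h).elim (fun h => hba h.symm) haT
      simp [Multiset.count_eq_zero_of_notMem (fun h => this (Multiset.mem_of_mem_erase h))]
    · simpa [hwa] using hY.countBounded w (hw.resolve_left hwa)

theorem IsProvider.demote {a : Sequent} {X Z : Hyper} (hX : IsProvider HR T U E a X)
    (hZ : SBDerivable HR Z) (hZT : ∀ y ∈ Z, y ∈ insert a T)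
    (hZE : CountBounded (insert a U) (Function.update E a (X.count a - 1)) Z) :
    ((∀ y ∈ Z, y ∈ T) ∧ CountBounded U E Z) ∨
      (IsProvider HR T U E a Z ∧ Z.count a < X.count a) := by
  have hXa := Multiset.count_pos.2 hX.mem
  have hZa : Z.count a ≤ X.count a - 1 := by simpa using hZE a (Set.mem_insert _ _)
  have hZU : ∀ w ∈ U, w ≠ a → Z.count w ≤ E w := fun w hw hwa => by
    simpa [hwa] using hZE w (Set.mem_insert_of_mem _ hw)
  have hXU : a ∈ U → X.count a - 1 ≤ E a := fun haU => by
    simpa using hX.countBounded a haU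
  by_cases haZ : a ∈ Z
  · refine .inr ⟨⟨hZ, haZ, fun y hy => hZT y hy, fun w hw => ?_⟩, by omega⟩
    rcases eq_or_ne w a with rfl | hwa
    · rw [Multiset.count_erase_self]
      have := hXU hw
      omega
    · rw [Multiset.count_erase_of_ne hwa]
      exact hZU w hw hwa
  · refine .inl ⟨fun y hy => (hZT y hy).resolve_left (ne_of_mem_of_not_mem hy haZ), ?_⟩
    intro w hw
    rcases eq_or_ne w a with rfl | hwa
    · simp [Multiset.count_eq_zero_of_notMem haZ]
    · exact hZU w hw hwa

end Providers

section Elimination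

variable {HR : Set HypRule} {lab : HLab} {Bs : List Sequent} {Ds : Hyper}

theorem SharedRule.exists_of_forall_mem (hR : SharedRule HR lab Bs Ds) (hDs : Ds ≠ 0)
    {T U : Set Sequent} {E : Sequent → ℕ} (hDsT : ∀ y ∈ Ds, y ∈ T)
    (hDsU : ∀ w ∈ U, w ∉ Ds)
    (hBsT : ∀ b ∈ Bs, b ∈ T) (hprov : ∀ b ∈ Bs, ∃ X, IsProvider HR T U E b X) :
    ∃ Z, SBDerivable HR Z ∧ Z ≠ 0 ∧ (∀ y ∈ Z, y ∈ T) ∧ CountBounded U E Z := by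
  choose! P hP using hprov
  refine ⟨_, hR.sbDerivable_add_sup fun b hb => ⟨(hP b hb).sbDerivable, (hP b hb).mem⟩,
    by simp [hDs], fun y hy => ?_, fun w hw => ?_⟩
  · rcases Multiset.mem_add.1 hy with hy | hy
    · exact hDsT y hy
    · obtain ⟨b, hb, hyb⟩ := Multiset.mem_sup.1 hy
      have hb := List.mem_toFinset.1 hb
      exact ((hP b hb).mem_or_mem y (Multiset.mem_of_mem_erase hyb)).elim
        (fun h => h ▸ hBsT b hb) id
  · rw [Multiset.count_add, Multiset.count_eq_zero_of_notMem (hDsU w hw), zero_add,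
      Multiset.count_finset_sup]
    exact Finset.sup_le fun b hb => (hP b (List.mem_toFinset.1 hb)).countBounded w hw

/-- The values `a ∈ W` among the active premiss components that lie outside `T` are
eliminated one at a time: `a` is provisionally admitted into `T`, with its number of copies
capped by one less than in its current provider, and the resulting hypersequent is either
free of `a` or a provider for `a` with fewer copies. -/
theorem SharedRule.exists_of_providers (hR : SharedRule HR lab Bs Ds) (hDs : Ds ≠ 0)
    (W : Finset Sequent) :
    ∀ (T U : Set Sequent) (E : Sequent → ℕ), (∀ y ∈ Ds, y ∈ T) →
      (∀ w ∈ U, w ∉ Ds) → (∀ b ∈ Bs, b ∉ T → b ∈ W) →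
      (∀ b ∈ Bs, ∃ X, IsProvider HR T U E b X) →
      ∃ Z, SBDerivable HR Z ∧ Z ≠ 0 ∧ (∀ y ∈ Z, y ∈ T) ∧ CountBounded U E Z := by
  induction W using Finset.induction_on with
  | empty =>
    intro T U E hDsT hDsU hBsT hprov
    refine hR.exists_of_forall_mem hDs hDsT hDsU (fun b hb => ?_) hprov
    by_contra h
    exact Finset.notMem_empty b (hBsT b hb h)
  | insert a W _ ih =>
    intro T U E hDsT hDsU hBsW hprov
    by_cases ha : a ∈ Bs ∧ a ∉ T
    · obtain ⟨haBs, haT⟩ := ha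
      have hDsa : a ∉ Ds := fun h => haT (hDsT a h)
      have hBsW' : ∀ b ∈ Bs, b ∉ insert a T → b ∈ W := fun b hb hbT =>
        (Finset.mem_insert.1 (hBsW b hb (hbT ∘ Set.mem_insert_of_mem _))).resolve_left
          (hbT ∘ (· ▸ Set.mem_insert _ _))
      obtain ⟨X, hX⟩ := hprov a haBs
      induction hn : X.count a using Nat.strong_induction_on generalizing X with
      | _ n ihn =>
        obtain ⟨Z, hZ, hne, hZT, hZE⟩ := ih (insert a T) (insert a U)
          (Function.update E a (X.count a - 1))
          (fun y hy => Set.mem_insert_of_mem _ (hDsT y hy))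
          (fun w hw => hw.elim (· ▸ hDsa) (hDsU w)) hBsW'
          (fun b hb => by
            rcases eq_or_ne b a with rfl | hba
            · exact ⟨X, hX.promote_self⟩
            · obtain ⟨Y, hY⟩ := hprov b hb
              exact ⟨Y, hY.promote_of_ne hba haT _⟩)
        rcases hX.demote hZ hZT hZE with ⟨hZT, hZE⟩ | ⟨hZa, hlt⟩
        · exact ⟨Z, hZ, hne, hZT, hZE⟩
        · exact ihn _ (hn ▸ hlt) Z hZa rfl
    · refine ih T U E hDsT hDsU (fun b hb hbT => ?_) hprov
      refine (Finset.mem_insert.1 (hBsW b hb hbT)).resolve_left ?_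
      rintro rfl
      exact ha ⟨hb, hbT⟩

theorem SharedRule.sbDerivableSubset (hR : SharedRule HR lab Bs Ds) (hDs : Ds ≠ 0)
    {G : Hyper} {ts : List HTree} (hts : ts.map HTree.concl = Bs.map (· ::ₘ G))
    (ih : ∀ u ∈ ts, SBDerivableSubset HR u.concl) : SBDerivableSubset HR (Ds + G) := by
  set T : Set Sequent := {y | y ∈ Ds + G}
  have hprov : ∀ b ∈ Bs, SBDerivableSubset HR (Ds + G) ∨
      ∃ X, IsProvider HR T ∅ (fun _ => 0) b X := by
    intro b hb
    obtain ⟨u, hu, hub⟩ := List.mem_map.1 (hts ▸ List.mem_map_of_mem (f := (· ::ₘ G)) hb)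
    obtain ⟨X, hX, hne, hXG⟩ := ih u hu
    rw [hub] at hXG
    by_cases hbX : b ∈ X
    · refine .inr ⟨X, hX, hbX, fun y hy => ?_, fun _ h => h.elim⟩
      exact (Multiset.mem_cons.1 (hXG y hy)).imp_right (Multiset.mem_add.2 <| .inr ·)
    · refine .inl ⟨X, hX, hne, fun y hy => Multiset.mem_add.2 <| .inr ?_⟩
      exact (Multiset.mem_cons.1 (hXG y hy)).resolve_left (ne_of_mem_of_not_mem hy hbX)
  by_cases hall : ∀ b ∈ Bs, ∃ X, IsProvider HR T ∅ (fun _ => 0) b X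
  · obtain ⟨Z, hZ, hne, hZT, -⟩ := hR.exists_of_providers hDs Bs.toFinset T ∅ _
      (fun y hy => Multiset.mem_add.2 (.inl hy)) (fun _ h => h.elim)
      (fun b hb _ => List.mem_toFinset.2 hb) hall
    exact ⟨Z, hZ, hne, hZT⟩
  · push Not at hall
    obtain ⟨b, hb, hno⟩ := hall
    exact (hprov b hb).resolve_right fun ⟨X, hX⟩ => hno X hX

end Elimination

section Rules

variable {HR : Set HypRule}

theorem HBase.eq_nil_or_shared {Ps : List Hyper} {h : Hyper} (hb : HBase Ps h) :
    (Ps = [] ∧ h ≠ 0) ∨ ∃ (Bs : List Sequent) (C : Sequent) (G : Hyper),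
      Ps = Bs.map (· ::ₘ G) ∧ h = C ::ₘ G ∧
        ∀ G', HBase (Bs.map (· ::ₘ G')) (C ::ₘ G') := by
  cases hb with
  | ax | botL => exact .inl ⟨rfl, by simp⟩
  | disjL φ ψ => exact .inr ⟨[_, _], _, _, rfl, rfl, fun _ => .disjL φ ψ⟩
  | disjR1 φ ψ => exact .inr ⟨[_], _, _, rfl, rfl, fun _ => .disjR1 φ ψ⟩
  | disjR2 φ ψ => exact .inr ⟨[_], _, _, rfl, rfl, fun _ => .disjR2 φ ψ⟩
  | conjL φ ψ => exact .inr ⟨[_], _, _, rfl, rfl, fun _ => .conjL φ ψ⟩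
  | conjR φ ψ => exact .inr ⟨[_, _], _, _, rfl, rfl, fun _ => .conjR φ ψ⟩
  | implL φ ψ => exact .inr ⟨[_, _], _, _, rfl, rfl, fun _ => .implL φ ψ⟩
  | implR φ ψ => exact .inr ⟨[_], _, _, rfl, rfl, fun _ => .implR φ ψ⟩
  | iw φ => exact .inr ⟨[_], _, _, rfl, rfl, fun _ => .iw φ⟩
  | ic φ => exact .inr ⟨[_], _, _, rfl, rfl, fun _ => .ic φ⟩
  | cut φ => exact .inr ⟨[_, _], _, _, rfl, rfl, fun _ => .cut φ⟩

theorem sharedRule_lj {Bs : List Sequent} {C : Sequent}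
    (hC : ∀ G, HBase (Bs.map (· ::ₘ G)) (C ::ₘ G)) : SharedRule HR .lj Bs {C} where
  lab_ne_ec := HLab.noConfusion
  lab_ne_ew := HLab.noConfusion
  isHDeriv_node G _ hts hall := by
    rw [Multiset.singleton_add]
    exact .lj (hts ▸ hC G) hall

def HypRule.premComps (hr : HypRule) (ctx : List Sequent) : List Sequent :=
  ((hr.comps.zip ctx).map fun pr =>
    pr.1.prems.map fun p => ((p + pr.2.1, pr.2.2) : Sequent)).flatten

def HypRule.conclComps (hr : HypRule) (ctx : List Sequent) : Hyper :=
  ↑((hr.comps.zip ctx).map fun pr => ((pr.1.concl + pr.2.1, pr.2.2) : Sequent))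

theorem HypRule.flatten_prems_eq (hr : HypRule) (ctx : List Sequent) (G : Hyper) :
    ((hr.comps.zip ctx).map fun pr => pr.1.prems.map fun p => (p + pr.2.1, pr.2.2) ::ₘ G).flatten
      = (hr.premComps ctx).map (· ::ₘ G) := by
  simp [premComps, List.map_flatten, Function.comp_def]

theorem HypRule.conclComps_ne_zero {hr : HypRule} (hc : hr.comps ≠ []) {ctx : List Sequent}
    (hlen : ctx.length = hr.comps.length) : hr.conclComps ctx ≠ 0 := by
  simpa [conclComps, ← List.length_eq_zero_iff, hlen] using hc

theorem sharedRule_hyp {hr : HypRule} (hmem : hr ∈ HR) {ctx : List Sequent}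
    (hlen : ctx.length = hr.comps.length) :
    SharedRule HR .hyp (hr.premComps ctx) (hr.conclComps ctx) where
  lab_ne_ec := HLab.noConfusion
  lab_ne_ew := HLab.noConfusion
  isHDeriv_node G _ hts hall :=
    .hyp hr hmem G ctx hlen (hts.trans (hr.flatten_prems_eq ctx G).symm) hall

theorem isHDeriv_leaf_of_comps_eq_nil {hr : HypRule} (hmem : hr ∈ HR) (hc : hr.comps = [])
    (H : Hyper) : IsHDeriv HR (.node .hyp H []) := by
  simpa using IsHDeriv.hyp hr hmem H [] (by simp [hc]) (ts := []) (by simp) (by simp)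

theorem IsHDeriv.sbDerivableSubset (hHR : ∀ hr ∈ HR, hr.comps ≠ []) {t : HTree}
    (h : IsHDeriv HR t) : SBDerivableSubset HR t.concl := by
  induction h with
  | lj hbase hall ih =>
    rcases hbase.eq_nil_or_shared with ⟨hnil, hne⟩ | ⟨Bs, C, G, hts, rfl, hC⟩
    · obtain rfl := List.map_eq_nil_iff.1 hnil
      exact ⟨_, ⟨_, .lj hbase hall, SB.leaf HLab.noConfusion HLab.noConfusion, rfl⟩, hne,
        fun _ => id⟩
    · rw [← Multiset.singleton_add]
      exact (sharedRule_lj hC).sbDerivableSubset (by simp) hts ih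
  | hyp hr hmem G ctx hlen hts _ ih =>
    exact (sharedRule_hyp hmem hlen).sbDerivableSubset
      (HypRule.conclComps_ne_zero (hHR hr hmem) hlen) (hts.trans (hr.flatten_prems_eq ctx G)) ih
  | ew s _ ih => exact ih.mono fun y hy => Multiset.mem_cons_of_mem hy
  | ec G s hu _ ih =>
    refine (hu ▸ ih).mono fun y hy => ?_
    rcases Multiset.mem_cons.1 hy with rfl | hy
    · exact Multiset.mem_cons_self _ _
    · exact hy

end Rules

section Contraction

variable {HR : Set HypRule}

theorem exists_structuredForm_of_replicate (s : Sequent) (n : ℕ) {z : HTree}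
    (hz : IsHDeriv HR z) (hsf : StructuredForm z) (hc : z.concl = .replicate (n + 1) s) :
    ∃ t', IsHDeriv HR t' ∧ t'.concl = {s} ∧ StructuredForm t' := by
  induction n generalizing z with
  | zero => exact ⟨z, hz, hc, hsf⟩
  | succ n ih =>
    exact ih (.ec _ s (by simpa [Multiset.replicate_succ] using hc) hz) (.ecStep hsf)
      (by simp [HTree.concl, Multiset.replicate_succ])

end Contraction

/-- Lemma (normal form of hypersequent derivations): any HLJ + ℍ derivation
of a sequent (a hypersequent with a single component) can be transformed
into a derivation of the same sequent in structured form. -/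
theorem to_structured_form (HR : Set HypRule) (t : HTree) (s : Sequent)
    (hder : IsHDeriv HR t) (hconcl : t.concl = {s}) :
    ∃ t' : HTree, IsHDeriv HR t' ∧ t'.concl = {s} ∧ StructuredForm t' := by
  by_cases hdeg : ∃ hr ∈ HR, hr.comps = []
  · obtain ⟨hr, hmem, hc⟩ := hdeg
    exact ⟨_, isHDeriv_leaf_of_comps_eq_nil hmem hc {s}, rfl,
      .ofSB (SB.leaf HLab.noConfusion HLab.noConfusion)⟩
  push Not at hdeg
  obtain ⟨X, ⟨z, hz, hsb, rfl⟩, hne, hX⟩ := hconcl ▸ hder.sbDerivableSubset hdeg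
  obtain ⟨n, hn⟩ := Nat.exists_eq_add_one_of_ne_zero (Multiset.card_pos.2 hne).ne'
  refine exists_structuredForm_of_replicate s n hz (.ofSB hsb) ?_
  rw [← hn, Multiset.eq_replicate_card]
  simpa using hX
end

section
/- For any hypersequent rule (Hr) of the restricted form with conclusion G | Σ₁¹,…,Σ_{n₁}¹, Γ₁ ⇒ Π₁ | … | Σ₁ᵏ,…,Σ_{nₖ}ᵏ, Γₖ ⇒ Πₖ and premiss sets M₁,…,Mₖ of the form G | Δʲᵢ, Γᵢ ⇒ Πᵢ (with each Δʲᵢ equal to some Σ_q^p, and Γᵢ, Πᵢ non-empty), HLJ extended with (Hr) is equivalent to Gentzen's natural deduction calculus NJ extended with the translated higher-level natural deduction rule Nr: a propositional intuitionistic formula φ satisfies ⊢_{HLJ+Hr} ⇒ φ if and only if ⊢_{NJ+Nr} φ. -/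
/-- A hypersequent rule (Hr) of the restricted form, given schematically:
the i-th component of its conclusion is σ₁ⁱ, …, σ_{nᵢ}ⁱ, Γᵢ ⇒ Πᵢ, where the
σ's are schematic formula variables (the variable σ_q^p is encoded by the
pair of indices (p, q)), and the set Mᵢ of premisses linked to it consists
of the hypersequents G | Δʲᵢ, Γᵢ ⇒ Πᵢ where each Δʲᵢ is some σ_q^p (recorded
as the list of references `(comps.get i).2`); `(comps.get i).1` is nᵢ.
The contexts Γᵢ and Πᵢ are non-empty (Πᵢ holds exactly one formula). -/
structure HLRule : Type where
  comps : List (ℕ × List (ℕ × ℕ))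

/-- The multiset σ₁ⁱ, …, σ_{nᵢ}ⁱ of the i-th conclusion component under the
instantiation `v` of the schematic variables (σ_q^p ↦ `v p q`). -/
def sigMS (R : HLRule) (v : ℕ → ℕ → Formula) (i : ℕ) : Multiset Formula :=
  Multiset.ofList (List.ofFn (fun j : Fin (R.comps.getD i (0, [])).1 => v i j))

/-- Derivability in HLJ + (Hr): the rules of HLJ together with the rule (Hr),
whose instances are given by an instantiation `v` of the schematic variables,
a shared hypersequent context `G`, and contexts Γᵢ ⇒ Πᵢ (`ctxΓ i`, `ctxPi i`)
for the k components. -/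
inductive HDer (R : HLRule) : Hyper → Prop
  | ax (φ : Formula) : HDer R {(({φ} : Multiset Formula), some φ)}
  | botL (Δ : Option Formula) : HDer R {(({Formula.bot} : Multiset Formula), Δ)}
  | disjL {G : Hyper} {Γ : Multiset Formula} {Δ : Option Formula} (φ ψ : Formula) :
      HDer R ((φ ::ₘ Γ, Δ) ::ₘ G) → HDer R ((ψ ::ₘ Γ, Δ) ::ₘ G) →
      HDer R ((Formula.disj φ ψ ::ₘ Γ, Δ) ::ₘ G)
  | disjR1 {G : Hyper} {Γ : Multiset Formula} (φ ψ : Formula) :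
      HDer R ((Γ, some φ) ::ₘ G) → HDer R ((Γ, some (Formula.disj φ ψ)) ::ₘ G)
  | disjR2 {G : Hyper} {Γ : Multiset Formula} (φ ψ : Formula) :
      HDer R ((Γ, some ψ) ::ₘ G) → HDer R ((Γ, some (Formula.disj φ ψ)) ::ₘ G)
  | conjL {G : Hyper} {Γ : Multiset Formula} {Δ : Option Formula} (φ ψ : Formula) :
      HDer R ((φ ::ₘ ψ ::ₘ Γ, Δ) ::ₘ G) → HDer R ((Formula.conj φ ψ ::ₘ Γ, Δ) ::ₘ G)
  | conjR {G : Hyper} {Γ : Multiset Formula} (φ ψ : Formula) :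
      HDer R ((Γ, some φ) ::ₘ G) → HDer R ((Γ, some ψ) ::ₘ G) →
      HDer R ((Γ, some (Formula.conj φ ψ)) ::ₘ G)
  | implL {G : Hyper} {Γ : Multiset Formula} {Δ : Option Formula} (φ ψ : Formula) :
      HDer R ((Γ, some φ) ::ₘ G) → HDer R ((ψ ::ₘ Γ, Δ) ::ₘ G) →
      HDer R ((Formula.impl φ ψ ::ₘ Γ, Δ) ::ₘ G)
  | implR {G : Hyper} {Γ : Multiset Formula} (φ ψ : Formula) :
      HDer R ((φ ::ₘ Γ, some ψ) ::ₘ G) → HDer R ((Γ, some (Formula.impl φ ψ)) ::ₘ G)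
  | iw {G : Hyper} {Γ : Multiset Formula} {Δ : Option Formula} (φ : Formula) :
      HDer R ((Γ, Δ) ::ₘ G) → HDer R ((φ ::ₘ Γ, Δ) ::ₘ G)
  | ic {G : Hyper} {Γ : Multiset Formula} {Δ : Option Formula} (φ : Formula) :
      HDer R ((φ ::ₘ φ ::ₘ Γ, Δ) ::ₘ G) → HDer R ((φ ::ₘ Γ, Δ) ::ₘ G)
  | cut {G : Hyper} {Γ Γ' : Multiset Formula} {Δ : Option Formula} (φ : Formula) :
      HDer R ((Γ, some φ) ::ₘ G) → HDer R ((φ ::ₘ Γ', Δ) ::ₘ G) →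
      HDer R ((Γ + Γ', Δ) ::ₘ G)
  | ew {G : Hyper} (s : Sequent) : HDer R G → HDer R (s ::ₘ G)
  | ec {G : Hyper} (s : Sequent) : HDer R (s ::ₘ s ::ₘ G) → HDer R (s ::ₘ G)
  | hr (v : ℕ → ℕ → Formula) (G : Hyper)
      (ctxΓ : ℕ → Multiset Formula) (ctxPi : ℕ → Formula)
      (hprem : ∀ i : Fin R.comps.length, ∀ r ∈ (R.comps.get i).2,
        HDer R ((v r.1 r.2 ::ₘ ctxΓ i, some (ctxPi i)) ::ₘ G)) :
      HDer R (((List.ofFn (fun i : Fin R.comps.length =>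
        ((sigMS R v i + ctxΓ i, some (ctxPi i)) : Sequent))) : Multiset Sequent) + G)

/-- An "upper inference" discharged by the higher-level natural deduction
rule: it concludes its target φᵢ from the premisses σ₁ⁱ, …, σ_{nᵢ}ⁱ together
with one subderivation of φᵢ from each discharged assumption δ. -/
structure Upper : Type where
  sigmas : List Formula
  deltas : List Formula
  tgt : Formula

/-- The i-th upper inference of an application of the translated rule Nr,
for the instantiation `v` of the schematic variables and the choice `w i` of
the formula φᵢ; its discharged assumptions are the instantiations of the
Δʲᵢ, read as ⊥ when Mᵢ is empty. -/
def mkUpper (R : HLRule) (v : ℕ → ℕ → Formula) (w : ℕ → Formula) (i : ℕ) : Upper :=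
  { sigmas := List.ofFn (fun j : Fin (R.comps.getD i (0, [])).1 => v i j)
    deltas := if (R.comps.getD i (0, [])).2 = [] then [Formula.bot]
              else (R.comps.getD i (0, [])).2.map (fun r => v r.1 r.2)
    tgt := w i }

/-- Derivability in NJ + Nr: Gentzen's natural deduction calculus NJ for
intuitionistic propositional logic extended with the higher-level rule Nr
translating the hypersequent rule `R`.  The parameter `T` records the upper
inferences currently enabled (dischargeable): the rule Nr (`nr`) derives φ
from k subderivations of φ, where the i-th subderivation may moreover use
the i-th upper inference (`upper`). -/
inductive NJD (R : HLRule) : Set Upper → List Formula → Formula → Prop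
  | hyp {T : Set Upper} {Γ : List Formula} {φ : Formula} : φ ∈ Γ → NJD R T Γ φ
  | conjI {T Γ} {φ ψ : Formula} :
      NJD R T Γ φ → NJD R T Γ ψ → NJD R T Γ (Formula.conj φ ψ)
  | conjE1 {T Γ} {φ ψ : Formula} : NJD R T Γ (Formula.conj φ ψ) → NJD R T Γ φ
  | conjE2 {T Γ} {φ ψ : Formula} : NJD R T Γ (Formula.conj φ ψ) → NJD R T Γ ψ
  | disjI1 {T Γ} {φ ψ : Formula} : NJD R T Γ φ → NJD R T Γ (Formula.disj φ ψ)
  | disjI2 {T Γ} {φ ψ : Formula} : NJD R T Γ ψ → NJD R T Γ (Formula.disj φ ψ)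
  | disjE {T Γ} {φ ψ χ : Formula} :
      NJD R T Γ (Formula.disj φ ψ) → NJD R T (φ :: Γ) χ → NJD R T (ψ :: Γ) χ →
      NJD R T Γ χ
  | implI {T Γ} {φ ψ : Formula} : NJD R T (φ :: Γ) ψ → NJD R T Γ (Formula.impl φ ψ)
  | implE {T Γ} {φ ψ : Formula} :
      NJD R T Γ (Formula.impl φ ψ) → NJD R T Γ φ → NJD R T Γ ψ
  | botE {T Γ} {φ : Formula} : NJD R T Γ Formula.bot → NJD R T Γ φ
  | upper {T Γ} {u : Upper} (hu : u ∈ T) :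
      (∀ σ ∈ u.sigmas, NJD R T Γ σ) →
      (∀ δ ∈ u.deltas, NJD R T (δ :: Γ) u.tgt) →
      NJD R T Γ u.tgt
  | nr {T Γ} {φ : Formula} (v : ℕ → ℕ → Formula) (w : ℕ → Formula) :
      (∀ i : Fin R.comps.length, NJD R (insert (mkUpper R v w i) T) Γ φ) →
      NJD R T Γ φ

/-! From NJ + Nr to HLJ + Hr: a natural deduction derivation in which the upper inferences `u`
are enabled becomes a sequent derivation whose antecedent also contains the formulas
`σ₁ → ⋯ → σₙ → ⋁δ` of those `u`. An application of Nr is simulated by the instance of (Hr) whose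
premisses are the axioms `δ ⇒ ⋁δᵢ`; each component `σᵢ ⇒ ⋁δᵢ` of its conclusion becomes
`⇒ σᵢ → ⋁δᵢ` and is cut against the i-th subderivation, and external contraction merges the
resulting copies of the end sequent.

From HLJ + Hr to NJ + Nr: a hypersequent is read as the disjunction of its components, expressed
by its elimination rule (`HyperValid`), and every rule preserves this reading. For (Hr), the
premisses are first taken as hypotheses, then Nr splits the proof into one branch per component,
and in the i-th branch the i-th upper inference derives that component. -/

namespace Formula

def impChain (l : List Formula) (ψ : Formula) : Formula := l.foldr impl ψ

def bigDisj (l : List Formula) : Formula := l.foldr disj bot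

end Formula

open Formula

def Upper.toFormula (u : Upper) : Formula := impChain u.sigmas (bigDisj u.deltas)

noncomputable def Sequent.toFormula (s : Sequent) : Formula :=
  impChain s.1.toList (s.2.getD bot)

namespace HDer

variable {R : HLRule} {G : Hyper} {Γ : Multiset Formula} {P : Option Formula}

theorem cons_of_singleton {s : Sequent} (h : HDer R {s}) (G : Hyper) : HDer R (s ::ₘ G) := by
  induction G using Multiset.induction with
  | empty => exact h
  | cons t G ih => rw [Multiset.cons_swap]; exact ew t ih

theorem iw_add (Δ : Multiset Formula) (h : HDer R ((Γ, P) ::ₘ G)) :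
    HDer R ((Δ + Γ, P) ::ₘ G) := by
  induction Δ using Multiset.induction with
  | empty => simpa using h
  | cons a Δ ih => rw [Multiset.cons_add]; exact iw a ih

theorem ic_add (Δ : Multiset Formula) (h : HDer R ((Δ + Δ + Γ, P) ::ₘ G)) :
    HDer R ((Δ + Γ, P) ::ₘ G) := by
  induction Δ using Multiset.induction generalizing Γ with
  | empty => simpa using h
  | cons a Δ ih =>
    have h' : HDer R ((a ::ₘ a ::ₘ (Δ + Δ + Γ), P) ::ₘ G) := by
      convert h using 3; simp only [Multiset.cons_add, Multiset.add_cons]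
    have := ih (Γ := a ::ₘ Γ) (by simpa [Multiset.add_cons] using ic a h')
    simpa [Multiset.add_cons] using this

theorem ax_of_mem {φ : Formula} (h : φ ∈ Γ) : HDer R ((Γ, some φ) ::ₘ G) := by
  obtain ⟨Γ, rfl⟩ := Multiset.exists_cons_of_mem h
  have := iw_add Γ ((ax (R := R) φ).cons_of_singleton G)
  rwa [add_comm, Multiset.singleton_add] at this

theorem botL_of_mem (h : bot ∈ Γ) : HDer R ((Γ, P) ::ₘ G) := by
  obtain ⟨Γ, rfl⟩ := Multiset.exists_cons_of_mem h
  have := iw_add Γ ((botL (R := R) P).cons_of_singleton G)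
  rwa [add_comm, Multiset.singleton_add] at this

theorem cut_same {φ : Formula} (h₁ : HDer R ((Γ, some φ) ::ₘ G))
    (h₂ : HDer R ((φ ::ₘ Γ, P) ::ₘ G)) : HDer R ((Γ, P) ::ₘ G) := by
  simpa using ic_add (Γ := 0) Γ (by simpa using cut φ h₁ h₂)

theorem implR_impChain {ψ : Formula} (l : List Formula) (h : HDer R ((↑l + Γ, some ψ) ::ₘ G)) :
    HDer R ((Γ, some (impChain l ψ)) ::ₘ G) := by
  induction l generalizing Γ with
  | nil => simpa [impChain] using h
  | cons a l ih =>
    refine implR a _ (ih ?_)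
    simpa [← Multiset.cons_coe, Multiset.cons_add, Multiset.add_cons] using h

theorem implL_impChain {ψ : Formula} (l : List Formula) (hl : ∀ σ ∈ l, HDer R ((Γ, some σ) ::ₘ G))
    (h : HDer R ((ψ ::ₘ Γ, P) ::ₘ G)) : HDer R ((impChain l ψ ::ₘ Γ, P) ::ₘ G) := by
  induction l with
  | nil => exact h
  | cons a l ih =>
    exact implL a _ (hl a (by simp)) (ih fun σ hσ => hl σ (by simp [hσ]))

theorem disjL_bigDisj (l : List Formula) (h : ∀ δ ∈ l, HDer R ((δ ::ₘ Γ, P) ::ₘ G)) :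
    HDer R ((bigDisj l ::ₘ Γ, P) ::ₘ G) := by
  induction l with
  | nil => exact botL_of_mem (Multiset.mem_cons_self _ _)
  | cons a l ih => exact disjL a _ (h a (by simp)) (ih fun δ hδ => h δ (by simp [hδ]))

theorem disjR_bigDisj {δ : Formula} {l : List Formula} (hδ : δ ∈ l)
    (h : HDer R ((Γ, some δ) ::ₘ G)) : HDer R ((Γ, some (bigDisj l)) ::ₘ G) := by
  induction l with
  | nil => simp at hδ
  | cons a l ih =>
    rcases List.mem_cons.1 hδ with rfl | hδ
    · exact disjR1 _ _ h
    · exact disjR2 _ _ (ih hδ)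

theorem cut_components {Γ : Multiset Formula} {φ : Formula}
    (c : List (List Formula × Formula))
    (hc : ∀ p ∈ c, HDer R {(impChain p.1 p.2 ::ₘ Γ, some φ)}) {G : Hyper}
    (h : HDer R ((c.map fun p => ((p.1 : Multiset Formula), some p.2) : Multiset Sequent) +
      (Γ, some φ) ::ₘ G)) :
    HDer R ((Γ, some φ) ::ₘ G) := by
  induction c generalizing G with
  | nil => simpa using h
  | cons p c ih =>
    rw [List.map_cons, ← Multiset.cons_coe, Multiset.cons_add] at h
    set K : Hyper := (c.map fun p => ((p.1 : Multiset Formula), some p.2) : Multiset Sequent) +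
      (Γ, some φ) ::ₘ G
    have hp : HDer R ((0, some (impChain p.1 p.2)) ::ₘ K) := implR_impChain p.1 (by rwa [add_zero])
    have hK : HDer R ((Γ, some φ) ::ₘ K) := by
      simpa using cut _ hp ((hc p (by simp)).cons_of_singleton K)
    refine ec _ (ih (fun q hq => hc q (by simp [hq])) ?_)
    simpa [K, Multiset.add_cons] using hK

end HDer

section mkUpper

variable {R : HLRule} (v : ℕ → ℕ → Formula) (w : ℕ → Formula) (i : Fin R.comps.length)

theorem comps_getD_eq_get : R.comps.getD i (0, []) = R.comps.get i := by
  simp [List.getD_eq_getElem?_getD]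

theorem mem_mkUpper_deltas {r : ℕ × ℕ} (hr : r ∈ (R.comps.get i).2) :
    v r.1 r.2 ∈ (mkUpper R v w i).deltas := by
  have hne : (R.comps.get i).2 ≠ [] := List.ne_nil_of_mem hr
  simp only [mkUpper, comps_getD_eq_get, if_neg hne]
  exact List.mem_map_of_mem hr

theorem eq_bot_or_of_mem_mkUpper_deltas {δ : Formula} (hδ : δ ∈ (mkUpper R v w i).deltas) :
    δ = bot ∨ ∃ r ∈ (R.comps.get i).2, δ = v r.1 r.2 := by
  simp only [mkUpper, comps_getD_eq_get] at hδ
  split_ifs at hδ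
  · exact Or.inl (List.mem_singleton.1 hδ)
  · obtain ⟨r, hr, rfl⟩ := List.mem_map.1 hδ
    exact Or.inr ⟨r, hr, rfl⟩

end mkUpper

theorem NJD.toHDer {R : HLRule} {T : Set Upper} {Γ : List Formula} {φ : Formula}
    (h : NJD R T Γ φ) (L : List Upper) (hL : ∀ u ∈ T, u ∈ L) :
    HDer R {(↑(Γ ++ L.map Upper.toFormula), some φ)} := by
  induction h generalizing L with
  | hyp hm => exact HDer.ax_of_mem (by simp [hm])
  | conjI _ _ ih₁ ih₂ => exact HDer.conjR _ _ (ih₁ L hL) (ih₂ L hL)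
  | conjE1 _ ih => exact HDer.cut_same (ih L hL) (HDer.conjL _ _ (HDer.ax_of_mem (by simp)))
  | conjE2 _ ih => exact HDer.cut_same (ih L hL) (HDer.conjL _ _ (HDer.ax_of_mem (by simp)))
  | disjI1 _ ih => exact HDer.disjR1 _ _ (ih L hL)
  | disjI2 _ ih => exact HDer.disjR2 _ _ (ih L hL)
  | disjE _ _ _ ih ih₁ ih₂ => exact HDer.cut_same (ih L hL) (HDer.disjL _ _ (ih₁ L hL) (ih₂ L hL))
  | implI _ ih => exact HDer.implR _ _ (ih L hL)
  | implE _ _ ih₁ ih₂ =>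
    exact HDer.cut_same (ih₁ L hL) (HDer.implL _ _ (ih₂ L hL) (HDer.ax_of_mem (by simp)))
  | botE _ ih => exact HDer.cut_same (ih L hL) (HDer.botL_of_mem (by simp))
  | @upper T Γ u hu _ _ ihσ ihδ =>
    refine HDer.cut_same (φ := u.toFormula) (HDer.ax_of_mem
      (Multiset.mem_coe.2 (List.mem_append_right _ (List.mem_map_of_mem (hL u hu))))) ?_
    exact HDer.implL_impChain _ (fun σ hσ => ihσ σ hσ L hL)
      (HDer.disjL_bigDisj _ fun δ hδ => ihδ δ hδ L hL)
  | @nr T Γ φ v w _ ih =>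
    set Γs : Multiset Formula := ↑(Γ ++ L.map Upper.toFormula)
    have hHr := HDer.hr v {(Γs, some φ)} (fun _ => 0) (fun i => bigDisj (mkUpper R v w i).deltas)
      fun i r hr => HDer.disjR_bigDisj (mem_mkUpper_deltas v w i hr)
        (HDer.ax_of_mem (Multiset.mem_cons_self _ _))
    refine HDer.cut_components
      (List.ofFn fun i : Fin R.comps.length => ((mkUpper R v w i).sigmas,
        bigDisj (mkUpper R v w i).deltas)) (fun p hp => ?_) (G := 0) ?_
    · obtain ⟨i, rfl⟩ := List.mem_ofFn.1 hp
      have := ih i (mkUpper R v w i :: L) fun u hu => by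
        rcases Set.mem_insert_iff.1 hu with rfl | hu
        · exact List.mem_cons_self
        · exact List.mem_cons_of_mem _ (hL u hu)
      convert this using 4
      exact (Multiset.coe_eq_coe.2 List.perm_middle).symm
    · convert hHr using 2
      · simp [List.map_ofFn, Function.comp_def, sigMS, mkUpper]
      · rfl

namespace NJD

variable {R : HLRule} {T : Set Upper} {Δ : List Formula}

theorem mono {Γ : List Formula} {φ : Formula} (h : NJD R T Γ φ) {T' : Set Upper}
    {Γ' : List Formula} (hT : T ⊆ T') (hΓ : Γ ⊆ Γ') : NJD R T' Γ' φ := by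
  induction h generalizing T' Γ' with
  | hyp hm => exact hyp (hΓ hm)
  | conjI _ _ ih₁ ih₂ => exact conjI (ih₁ hT hΓ) (ih₂ hT hΓ)
  | conjE1 _ ih => exact conjE1 (ih hT hΓ)
  | conjE2 _ ih => exact conjE2 (ih hT hΓ)
  | disjI1 _ ih => exact disjI1 (ih hT hΓ)
  | disjI2 _ ih => exact disjI2 (ih hT hΓ)
  | disjE _ _ _ ih ih₁ ih₂ =>
    exact disjE (ih hT hΓ) (ih₁ hT (List.cons_subset_cons _ hΓ))
      (ih₂ hT (List.cons_subset_cons _ hΓ))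
  | implI _ ih => exact implI (ih hT (List.cons_subset_cons _ hΓ))
  | implE _ _ ih₁ ih₂ => exact implE (ih₁ hT hΓ) (ih₂ hT hΓ)
  | botE _ ih => exact botE (ih hT hΓ)
  | upper hu _ _ ihσ ihδ =>
    exact upper (hT hu) (fun σ hσ => ihσ σ hσ hT hΓ)
      (fun δ hδ => ihδ δ hδ hT (List.cons_subset_cons _ hΓ))
  | nr v w _ ih => exact nr v w fun i => ih i (Set.insert_subset_insert hT) hΓ

theorem cut {φ ψ : Formula} (h₁ : NJD R T Δ φ) (h₂ : NJD R T (φ :: Δ) ψ) : NJD R T Δ ψ :=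
  implE (implI h₂) h₁

theorem impChain_intro {ψ : Formula} (l : List Formula) (h : NJD R T (l ++ Δ) ψ) :
    NJD R T Δ (impChain l ψ) := by
  induction l generalizing Δ with
  | nil => exact h
  | cons a l ih =>
    refine implI (ih (h.mono subset_rfl ?_))
    intro x hx
    simp only [List.cons_append, List.mem_cons, List.mem_append] at hx ⊢
    tauto

theorem impChain_elim {ψ : Formula} {l : List Formula} (h : NJD R T Δ (impChain l ψ))
    (hl : ∀ a ∈ l, NJD R T Δ a) : NJD R T Δ ψ := by
  induction l with
  | nil => exact h
  | cons a l ih => exact ih (implE h (hl a (by simp))) fun b hb => hl b (by simp [hb])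

theorem toFormula_intro {Γ : Multiset Formula} {P : Option Formula}
    (h : NJD R T (Γ.toList ++ Δ) (P.getD bot)) : NJD R T Δ (Sequent.toFormula (Γ, P)) :=
  impChain_intro _ h

theorem toFormula_elim {Γ : Multiset Formula} {P : Option Formula}
    (hs : Sequent.toFormula (Γ, P) ∈ Δ) (hΓ : ∀ a ∈ Γ, NJD R T Δ a) : NJD R T Δ (P.getD bot) :=
  impChain_elim (hyp hs) fun a ha => hΓ a (Multiset.mem_toList.1 ha)

theorem toFormula_elim_of_subset {Γ : Multiset Formula} {P : Option Formula}
    (hs : Sequent.toFormula (Γ, P) ∈ Δ) (hΓ : ∀ a ∈ Γ, a ∈ Δ) : NJD R T Δ (P.getD bot) :=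
  toFormula_elim hs fun a ha => hyp (hΓ a ha)

end NJD

def HyperValid (R : HLRule) (H : Hyper) : Prop :=
  ∀ (T : Set Upper) (Δ : List Formula) (χ : Formula),
    (∀ s ∈ H, NJD R T (Sequent.toFormula s :: Δ) χ) → NJD R T Δ χ

namespace HyperValid

variable {R : HLRule} {G : Hyper}

theorem elim_premises {T : Set Upper} {χ : Formula} (prem : List Sequent)
    (hprem : ∀ s ∈ prem, HyperValid R (s ::ₘ G)) {Δ : List Formula}
    (hG : ∀ s ∈ G, NJD R T (Sequent.toFormula s :: Δ) χ)
    (h : NJD R T (prem.map Sequent.toFormula ++ Δ) χ) : NJD R T Δ χ := by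
  induction prem generalizing Δ with
  | nil => exact h
  | cons s prem ih =>
    refine hprem s (by simp) T Δ χ fun t ht => ?_
    rcases Multiset.mem_cons.1 ht with rfl | ht
    · refine ih (fun u hu => hprem u (by simp [hu])) (fun u hu => (hG u hu).mono subset_rfl ?_)
        (h.mono subset_rfl ?_)
      · exact List.cons_subset_cons _ (List.subset_cons_self _ _)
      · intro x hx
        simp only [List.map_cons, List.cons_append, List.mem_cons, List.mem_append] at hx ⊢
        tauto
    · exact hG t ht

theorem of_premises {s : Sequent} (prem : List Sequent)
    (hprem : ∀ t ∈ prem, HyperValid R (t ::ₘ G))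
    (h : ∀ T Δ, NJD R T (prem.map Sequent.toFormula ++ Δ) (Sequent.toFormula s)) :
    HyperValid R (s ::ₘ G) := fun T Δ _ hs =>
  elim_premises prem hprem (fun t ht => hs t (Multiset.mem_cons_of_mem ht))
    (NJD.cut (h T Δ) ((hs s (Multiset.mem_cons_self _ _)).mono subset_rfl
      (List.cons_subset_cons _ (List.subset_append_right _ _))))

theorem of_premise {s₁ s : Sequent} (h₁ : HyperValid R (s₁ ::ₘ G))
    (h : ∀ T Δ, Sequent.toFormula s₁ ∈ Δ → NJD R T Δ (Sequent.toFormula s)) :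
    HyperValid R (s ::ₘ G) :=
  of_premises [s₁] (by simpa using h₁) fun T Δ => h T _ List.mem_cons_self

theorem of_premises₂ {s₁ s₂ s : Sequent} (h₁ : HyperValid R (s₁ ::ₘ G))
    (h₂ : HyperValid R (s₂ ::ₘ G))
    (h : ∀ T Δ, Sequent.toFormula s₁ ∈ Δ → Sequent.toFormula s₂ ∈ Δ →
      NJD R T Δ (Sequent.toFormula s)) :
    HyperValid R (s ::ₘ G) :=
  of_premises [s₁, s₂] (by simp [h₁, h₂]) fun T Δ => h T _ List.mem_cons_self (by simp)

theorem hr (v : ℕ → ℕ → Formula) (G : Hyper) (ctxΓ : ℕ → Multiset Formula) (ctxPi : ℕ → Formula)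
    (hprem : ∀ i : Fin R.comps.length, ∀ r ∈ (R.comps.get i).2,
      HyperValid R ((v r.1 r.2 ::ₘ ctxΓ i, some (ctxPi i)) ::ₘ G)) :
    HyperValid R ((List.ofFn (fun i : Fin R.comps.length =>
      ((sigMS R v i + ctxΓ i, some (ctxPi i)) : Sequent)) : Multiset Sequent) + G) := by
  intro T Δ χ hs
  set prem : List Sequent := (List.finRange R.comps.length).flatMap fun i =>
    (R.comps.get i).2.map fun r => (v r.1 r.2 ::ₘ ctxΓ i, some (ctxPi i))
  have mem_prem {i : Fin R.comps.length} {r : ℕ × ℕ} (hr : r ∈ (R.comps.get i).2) :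
      (v r.1 r.2 ::ₘ ctxΓ i, some (ctxPi i)) ∈ prem :=
    List.mem_flatMap.2 ⟨i, List.mem_finRange i, List.mem_map_of_mem hr⟩
  refine elim_premises prem (fun s hs' => ?_)
    (fun s hs' => hs s (Multiset.mem_add.2 (.inr hs'))) ?_
  · obtain ⟨i, -, hs'⟩ := List.mem_flatMap.1 hs'
    obtain ⟨r, hr, rfl⟩ := List.mem_map.1 hs'
    exact hprem i r hr
  refine NJD.nr v ctxPi fun i => NJD.cut (NJD.toFormula_intro ?_)
    ((hs _ (Multiset.mem_add.2 (.inl (Multiset.mem_coe.2 (List.mem_ofFn.2 ⟨i, rfl⟩))))).mono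
      (Set.subset_insert _ _) (List.cons_subset_cons _ (List.subset_append_right _ _)))
  refine NJD.upper (Set.mem_insert _ _) (fun σ hσ => NJD.hyp ?_) fun δ hδ => ?_
  · simp only [List.mem_append, Multiset.mem_toList, Multiset.mem_add]
    exact .inl (.inl (Multiset.mem_coe.2 hσ))
  rcases eq_bot_or_of_mem_mkUpper_deltas v ctxPi i hδ with rfl | ⟨r, hr, rfl⟩
  · exact NJD.botE (NJD.hyp List.mem_cons_self)
  · exact NJD.toFormula_elim_of_subset (List.mem_cons_of_mem _ (List.mem_append_right _
      (List.mem_append_left _ (List.mem_map_of_mem (mem_prem hr))))) fun a ha => by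
        simp at ha ⊢; tauto

end HyperValid

theorem HDer.hyperValid {R : HLRule} {H : Hyper} (h : HDer R H) : HyperValid R H := by
  induction h with
  | ax φ =>
    exact HyperValid.of_premises (G := 0) [] (by simp) fun T Δ =>
      NJD.toFormula_intro (NJD.hyp (by simp))
  | botL P =>
    exact HyperValid.of_premises (G := 0) [] (by simp) fun T Δ =>
      NJD.toFormula_intro (NJD.botE (NJD.hyp (by simp)))
  | disjL φ ψ _ _ ih₁ ih₂ =>
    refine HyperValid.of_premises₂ ih₁ ih₂ fun T Δ h₁ h₂ => NJD.toFormula_intro ?_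
    refine NJD.disjE (φ := φ) (ψ := ψ) (NJD.hyp (by simp)) ?_ ?_
    · exact NJD.toFormula_elim_of_subset (List.mem_cons_of_mem _ (List.mem_append_right _ h₁))
        fun a ha => by simp at ha ⊢; tauto
    · exact NJD.toFormula_elim_of_subset (List.mem_cons_of_mem _ (List.mem_append_right _ h₂))
        fun a ha => by simp at ha ⊢; tauto
  | disjR1 φ ψ _ ih =>
    refine HyperValid.of_premise ih fun T Δ h₁ => NJD.toFormula_intro (NJD.disjI1 ?_)
    exact NJD.toFormula_elim_of_subset (List.mem_append_right _ h₁) fun a ha => by simp [ha]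
  | disjR2 φ ψ _ ih =>
    refine HyperValid.of_premise ih fun T Δ h₁ => NJD.toFormula_intro (NJD.disjI2 ?_)
    exact NJD.toFormula_elim_of_subset (List.mem_append_right _ h₁) fun a ha => by simp [ha]
  | conjL φ ψ _ ih =>
    refine HyperValid.of_premise ih fun T Δ h₁ => NJD.toFormula_intro ?_
    refine NJD.toFormula_elim (List.mem_append_right _ h₁) fun a ha => ?_
    rcases Multiset.mem_cons.1 ha with rfl | ha
    · exact NJD.conjE1 (ψ := ψ) (NJD.hyp (by simp))
    rcases Multiset.mem_cons.1 ha with rfl | ha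
    · exact NJD.conjE2 (φ := φ) (NJD.hyp (by simp))
    · exact NJD.hyp (by simp [ha])
  | conjR φ ψ _ _ ih₁ ih₂ =>
    refine HyperValid.of_premises₂ ih₁ ih₂ fun T Δ h₁ h₂ => NJD.toFormula_intro ?_
    exact NJD.conjI
      (NJD.toFormula_elim_of_subset (List.mem_append_right _ h₁) fun a ha => by simp [ha])
      (NJD.toFormula_elim_of_subset (List.mem_append_right _ h₂) fun a ha => by simp [ha])
  | implL φ ψ _ _ ih₁ ih₂ =>
    refine HyperValid.of_premises₂ ih₁ ih₂ fun T Δ h₁ h₂ => NJD.toFormula_intro ?_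
    refine NJD.toFormula_elim (List.mem_append_right _ h₂) fun a ha => ?_
    rcases Multiset.mem_cons.1 ha with rfl | ha
    · exact NJD.implE (NJD.hyp (by simp))
        (NJD.toFormula_elim_of_subset (List.mem_append_right _ h₁) fun a ha => by simp [ha])
    · exact NJD.hyp (by simp [ha])
  | implR φ ψ _ ih =>
    refine HyperValid.of_premise ih fun T Δ h₁ => NJD.toFormula_intro (NJD.implI ?_)
    exact NJD.toFormula_elim_of_subset (List.mem_cons_of_mem _ (List.mem_append_right _ h₁))
      fun a ha => by simp at ha ⊢; tauto
  | iw φ _ ih =>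
    refine HyperValid.of_premise ih fun T Δ h₁ => NJD.toFormula_intro ?_
    exact NJD.toFormula_elim_of_subset (List.mem_append_right _ h₁) fun a ha => by simp [ha]
  | ic φ _ ih =>
    refine HyperValid.of_premise ih fun T Δ h₁ => NJD.toFormula_intro ?_
    exact NJD.toFormula_elim_of_subset (List.mem_append_right _ h₁) fun a ha => by
      simp at ha ⊢; tauto
  | cut φ _ _ ih₁ ih₂ =>
    refine HyperValid.of_premises₂ ih₁ ih₂ fun T Δ h₁ h₂ => NJD.toFormula_intro ?_
    refine NJD.toFormula_elim (List.mem_append_right _ h₂) fun a ha => ?_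
    rcases Multiset.mem_cons.1 ha with rfl | ha
    · exact NJD.toFormula_elim_of_subset (List.mem_append_right _ h₁) fun a ha => by simp [ha]
    · exact NJD.hyp (by simp [ha])
  | ew s _ ih => exact fun T Δ χ hs => ih T Δ χ fun t ht => hs t (Multiset.mem_cons_of_mem ht)
  | ec s _ ih => exact fun T Δ χ hs => ih T Δ χ fun t ht => hs t (by simpa using ht)
  | hr v G ctxΓ ctxPi _ ih => exact HyperValid.hr v G ctxΓ ctxPi ih

theorem hlj_nj_equivalence_general (R : HLRule)
    (φ : Formula) :
    HDer R ({((0 : Multiset Formula), some φ)} : Hyper) ↔ NJD R ∅ [] φ := by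
  constructor
  · intro h
    refine h.hyperValid ∅ [] φ fun s hs => ?_
    rw [Multiset.mem_singleton.1 hs]
    exact NJD.toFormula_elim List.mem_cons_self (by simp)
  · intro h
    simpa using h.toHDer [] (by simp)

/-- Theorem: HLJ extended with a hypersequent rule (Hr) of the restricted
form is equivalent to NJ extended with the translated higher-level natural
deduction rule Nr: a formula φ satisfies ⊢_{HLJ+Hr} ⇒ φ iff ⊢_{NJ+Nr} φ. -/
theorem hlj_nj_equivalence (R : HLRule)
    (hvalid : ∀ c ∈ R.comps, ∀ r ∈ c.2,
      r.1 < R.comps.length ∧ r.2 < (R.comps.getD r.1 (0, [])).1)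
    (φ : Formula) :
    HDer R ({((0 : Multiset Formula), some φ)} : Hyper) ↔ NJD R ∅ [] φ :=
  hlj_nj_equivalence_general R φ
end
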